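/- arXiv:2410.02898 — 8 statements merged into one kernel-verified Lean document; each statement's English description precedes it below -/
import Mathlib

section
/- Suppose the set S = {y | H_g(y) > 0} satisfies S ⊆ {y | g(y) > 0} ∩ {y | l(y) > 0}; suppose π_H is a control policy rendering S robustly invariant, i.e., for all y ∈ S and all d ∈ D, f(y, π_H(y), d) ∈ S; and suppose π_V is a control policy such that for every x with V(x) > 0 and every disturbance policy π_d, the closed-loop trajectory (x_t) from x under (π_V, π_d) admits some τ ∈ ℕ with H_g(x_τ) > 0 and l(x_t) > 0 for all t ≤ τ. Then for every x with V(x) > 0, the switching policy π_RAS defined by π_RAS(y) = π_V(y) if H_g(y) ≤ 0 and π_RAS(y) = π_H(y) otherwise, witnesses x ∈ RAS: for every disturbance policy π_d, the closed-loop trajectory from x under (π_RAS, π_d) satisfies l(x_t) > 0 for all t ∈ ℕ and there exists τ ∈ ℕ with g(x_t) > 0 for all t ≥ τ. -/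
/-!
Off `S = {H_g > 0}` the switching policy acts as `π_V`, so its trajectory follows the `π_V`
trajectory, which is safe and reaches `S`; hence it enters `S` no later than the `π_V` trajectory
does. From then on it acts as `π_H`, under which `S` is robustly invariant, and
`S ⊆ {g > 0} ∩ {l > 0}`.
-/

open Set

noncomputable section

/-- One-step closed-loop map of the system `x_{t+1} = f(x_t, π_u(x_t), π_d(x_t))`
under a control policy `πu : ℝⁿ → U` and a disturbance policy `πd : ℝⁿ → D`.
The closed-loop trajectory from `x` is `t ↦ (cl f πu πd)^[t] x`. -/
def cl {n mu md : ℕ} {U : Set (Fin mu → ℝ)} {D : Set (Fin md → ℝ)}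
    (f : (Fin n → ℝ) → (Fin mu → ℝ) → (Fin md → ℝ) → (Fin n → ℝ))
    (πu : (Fin n → ℝ) → U) (πd : (Fin n → ℝ) → D) :
    (Fin n → ℝ) → (Fin n → ℝ) :=
  fun y => f y (πu y) (πd y)

/-- The reach-avoid-stay set `RAS`. -/
def RASset {n mu md : ℕ} (U : Set (Fin mu → ℝ)) (D : Set (Fin md → ℝ))
    (f : (Fin n → ℝ) → (Fin mu → ℝ) → (Fin md → ℝ) → (Fin n → ℝ))
    (g l : (Fin n → ℝ) → ℝ) : Set (Fin n → ℝ) :=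
  {x | ∃ πu : (Fin n → ℝ) → U, ∀ πd : (Fin n → ℝ) → D,
      (∀ t : ℕ, 0 < l ((cl f πu πd)^[t] x)) ∧
      ∃ τ : ℕ, ∀ t : ℕ, τ ≤ t → 0 < g ((cl f πu πd)^[t] x)}

/-- The robust viability kernel `AS`. -/
def ASset {n mu md : ℕ} (U : Set (Fin mu → ℝ)) (D : Set (Fin md → ℝ))
    (f : (Fin n → ℝ) → (Fin mu → ℝ) → (Fin md → ℝ) → (Fin n → ℝ))
    (g l : (Fin n → ℝ) → ℝ) : Set (Fin n → ℝ) :=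
  {x | ∃ πu : (Fin n → ℝ) → U, ∀ πd : (Fin n → ℝ) → D,
      ∀ t : ℕ, 0 < l ((cl f πu πd)^[t] x) ∧ 0 < g ((cl f πu πd)^[t] x)}

/-- The discounted value function
`H(x) = sup_{π_u} inf_{π_d} inf_t γ^t min(g(x_t), l(x_t))`. -/
def Hval {n mu md : ℕ} (U : Set (Fin mu → ℝ)) (D : Set (Fin md → ℝ))
    (f : (Fin n → ℝ) → (Fin mu → ℝ) → (Fin md → ℝ) → (Fin n → ℝ))
    (γ : ℝ) (g l : (Fin n → ℝ) → ℝ) (x : Fin n → ℝ) : ℝ :=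
  ⨆ πu : (Fin n → ℝ) → U, ⨅ πd : (Fin n → ℝ) → D, ⨅ t : ℕ,
    γ ^ t * min (g ((cl f πu πd)^[t] x)) (l ((cl f πu πd)^[t] x))

/-- `H_g(x) = H(x)` if `H(x) < 0`, and `g(x)` otherwise. -/
def Hg {n mu md : ℕ} (U : Set (Fin mu → ℝ)) (D : Set (Fin md → ℝ))
    (f : (Fin n → ℝ) → (Fin mu → ℝ) → (Fin md → ℝ) → (Fin n → ℝ))
    (γ : ℝ) (g l : (Fin n → ℝ) → ℝ) (x : Fin n → ℝ) : ℝ :=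
  if Hval U D f γ g l x < 0 then Hval U D f γ g l x else g x

/-- The discounted value function
`V(x) = sup_{π_u} inf_{π_d} sup_t min( γ^t H_g(x_t), inf_{s ≤ t} γ^s l(x_s) )`. -/
def Vval {n mu md : ℕ} (U : Set (Fin mu → ℝ)) (D : Set (Fin md → ℝ))
    (f : (Fin n → ℝ) → (Fin mu → ℝ) → (Fin md → ℝ) → (Fin n → ℝ))
    (γ : ℝ) (g l : (Fin n → ℝ) → ℝ) (x : Fin n → ℝ) : ℝ :=
  ⨆ πu : (Fin n → ℝ) → U, ⨅ πd : (Fin n → ℝ) → D, ⨆ t : ℕ,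
    min (γ ^ t * Hg U D f γ g l ((cl f πu πd)^[t] x))
      (⨅ s : Fin (t + 1), γ ^ (s : ℕ) * l ((cl f πu πd)^[(s : ℕ)] x))

open Function

section Switching

variable {α : Type*} {F G : α → α} {S : Set α} {x : α}

theorem Set.MapsTo.iterate_mem_of_le (hF : MapsTo F S S) {τ t : ℕ} (hτ : F^[τ] x ∈ S)
    (ht : τ ≤ t) : F^[t] x ∈ S := by
  obtain ⟨k, rfl⟩ := Nat.exists_eq_add_of_le ht
  rw [add_comm, iterate_add_apply]
  exact hF.iterate k hτ

theorem iterate_eq_of_eqOn_compl (hFG : EqOn F G Sᶜ) :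
    ∀ {t : ℕ}, (∀ s < t, F^[s] x ∉ S) → F^[t] x = G^[t] x
  | 0, _ => rfl
  | t + 1, h => by
    have ih : F^[t] x = G^[t] x := iterate_eq_of_eqOn_compl hFG fun s hs => h s (by omega)
    rw [iterate_succ_apply', iterate_succ_apply', hFG (h t t.lt_succ_self), ih]

theorem exists_iterate_mem_of_eqOn_compl (hFG : EqOn F G Sᶜ) {τ : ℕ} (hτ : G^[τ] x ∈ S) :
    ∃ τ₀ ≤ τ, F^[τ₀] x ∈ S ∧ ∀ t ≤ τ₀, F^[t] x = G^[t] x := by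
  classical
  have hex : ∃ t, F^[t] x ∈ S := by
    by_contra! h
    exact h τ (iterate_eq_of_eqOn_compl hFG (fun s _ => h s) ▸ hτ)
  have hbefore : ∀ t ≤ Nat.find hex, F^[t] x = G^[t] x := fun t ht =>
    iterate_eq_of_eqOn_compl hFG fun s hs => Nat.find_min hex (hs.trans_le ht)
  have hle : Nat.find hex ≤ τ := by
    by_contra! hlt
    exact hlt.not_ge (Nat.find_min' hex (hbefore τ hlt.le ▸ hτ))
  exact ⟨Nat.find hex, hle, Nat.find_spec hex, hbefore⟩

end Switching

theorem switching_policy_achieves_RAS_general {n mu md : ℕ}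
    (U : Set (Fin mu → ℝ)) (D : Set (Fin md → ℝ))
    (f : (Fin n → ℝ) → (Fin mu → ℝ) → (Fin md → ℝ) → (Fin n → ℝ))
    (γ : ℝ)
    (g l : (Fin n → ℝ) → ℝ)
    (πH πV : (Fin n → ℝ) → U)
    (hS : {y | 0 < Hg U D f γ g l y} ⊆ {y | 0 < g y} ∩ {y | 0 < l y})
    (hInv : ∀ y, 0 < Hg U D f γ g l y → ∀ d ∈ D, 0 < Hg U D f γ g l (f y (πH y) d))
    (hReach : ∀ x, 0 < Vval U D f γ g l x → ∀ πd : (Fin n → ℝ) → D,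
      ∃ τ : ℕ, 0 < Hg U D f γ g l ((cl f πV πd)^[τ] x) ∧
        ∀ t : ℕ, t ≤ τ → 0 < l ((cl f πV πd)^[t] x))
    (x : Fin n → ℝ) (hx : 0 < Vval U D f γ g l x) :
    ∀ πd : (Fin n → ℝ) → D,
      (∀ t : ℕ,
        0 < l ((cl f (fun y => if Hg U D f γ g l y ≤ 0 then πV y else πH y) πd)^[t] x)) ∧
      ∃ τ : ℕ, ∀ t : ℕ, τ ≤ t →
        0 < g ((cl f (fun y => if Hg U D f γ g l y ≤ 0 then πV y else πH y) πd)^[t] x) := by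
  intro πd
  set S := {y | 0 < Hg U D f γ g l y}
  set F := cl f (fun y => if Hg U D f γ g l y ≤ 0 then πV y else πH y) πd
  set G := cl f πV πd
  have hFG : EqOn F G Sᶜ := fun y hy => by
    rw [mem_compl_iff, mem_ofPred_eq, not_lt] at hy
    simp only [F, G, cl, if_pos hy]
  have hFS : MapsTo F S S := fun y (hy : 0 < Hg U D f γ g l y) => by
    simpa only [F, S, cl, mem_ofPred_eq, if_neg hy.not_ge] using hInv y hy _ (πd y).2
  obtain ⟨τ, hτS, hτl⟩ := hReach x hx πd
  obtain ⟨τ₀, hτ₀τ, hτ₀S, hbefore⟩ := exists_iterate_mem_of_eqOn_compl hFG hτS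
  have hstay : ∀ t, τ₀ ≤ t → F^[t] x ∈ S := fun t => hFS.iterate_mem_of_le hτ₀S
  refine ⟨fun t => ?_, τ₀, fun t ht => (hS (hstay t ht)).1⟩
  rcases le_total t τ₀ with ht | ht
  · exact hbefore t ht ▸ hτl t (ht.trans hτ₀τ)
  · exact (hS (hstay t ht)).2

/-- if the super-zero level set `S = {y | H_g(y) > 0}` is contained in
`{g > 0} ∩ {l > 0}`, `π_H` renders `S` robustly invariant, and `π_V` safely reaches `S`
from every state with `V > 0`, then the switching policy
`π_RAS(y) = π_V(y)` if `H_g(y) ≤ 0`, else `π_H(y)`, witnesses `x ∈ RAS` whenever `V(x) > 0`. -/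
theorem switching_policy_achieves_RAS {n mu md : ℕ}
    (U : Set (Fin mu → ℝ)) (D : Set (Fin md → ℝ))
    (hU : U.Nonempty) (hD : D.Nonempty)
    (f : (Fin n → ℝ) → (Fin mu → ℝ) → (Fin md → ℝ) → (Fin n → ℝ))
    (γ : ℝ) (hγ : γ ∈ Set.Ioo (0 : ℝ) 1)
    (g l : (Fin n → ℝ) → ℝ)
    (hg : ∃ M, ∀ y, |g y| ≤ M) (hl : ∃ M, ∀ y, |l y| ≤ M)
    (πH πV : (Fin n → ℝ) → U)
    (hS : {y | 0 < Hg U D f γ g l y} ⊆ {y | 0 < g y} ∩ {y | 0 < l y})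
    (hInv : ∀ y, 0 < Hg U D f γ g l y → ∀ d ∈ D, 0 < Hg U D f γ g l (f y (πH y) d))
    (hReach : ∀ x, 0 < Vval U D f γ g l x → ∀ πd : (Fin n → ℝ) → D,
      ∃ τ : ℕ, 0 < Hg U D f γ g l ((cl f πV πd)^[τ] x) ∧
        ∀ t : ℕ, t ≤ τ → 0 < l ((cl f πV πd)^[t] x))
    (x : Fin n → ℝ) (hx : 0 < Vval U D f γ g l x) :
    ∀ πd : (Fin n → ℝ) → D,
      (∀ t : ℕ,
        0 < l ((cl f (fun y => if Hg U D f γ g l y ≤ 0 then πV y else πH y) πd)^[t] x)) ∧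
      ∃ τ : ℕ, ∀ t : ℕ, τ ≤ t →
        0 < g ((cl f (fun y => if Hg U D f γ g l y ≤ 0 then πV y else πH y) πd)^[t] x) :=
  switching_policy_achieves_RAS_general U D f γ g l πH πV hS hInv hReach x hx
end
end

section
/- If x belongs to the robust viability kernel AS, then H(x) = 0. -/
open Set

noncomputable section

/-- if `x` belongs to the robust viability kernel `AS`, then `H(x) = 0`. -/
theorem Hval_eq_zero_of_mem_AS {n mu md : ℕ} (U : Set (Fin mu → ℝ)) (D : Set (Fin md → ℝ))
    (hU : U.Nonempty) (hD : D.Nonempty)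
    (f : (Fin n → ℝ) → (Fin mu → ℝ) → (Fin md → ℝ) → (Fin n → ℝ))
    (γ : ℝ) (hγ : γ ∈ Set.Ioo (0 : ℝ) 1)
    (g l : (Fin n → ℝ) → ℝ)
    (hg : ∃ M, ∀ y, |g y| ≤ M) (hl : ∃ M, ∀ y, |l y| ≤ M)
    (x : Fin n → ℝ) (hx : x ∈ ASset U D f g l) :
    Hval U D f γ g l x = 0 := by
  obtain ⟨Mg, hMg⟩ := hg
  obtain ⟨Ml, hMl⟩ := hl
  haveI : Nonempty ↥U := hU.to_subtype
  haveI : Nonempty ↥D := hD.to_subtype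
  set M := max Mg Ml with hMdef
  have hγ0 : 0 < γ := hγ.1
  have hγ1 : γ < 1 := hγ.2
  have hpow1 : ∀ t : ℕ, γ ^ t ≤ 1 := fun t => pow_le_one₀ hγ0.le hγ1.le
  have hkey : ∀ (πu : (Fin n → ℝ) → U) (πd : (Fin n → ℝ) → D) (t : ℕ),
      |min (g ((cl f πu πd)^[t] x)) (l ((cl f πu πd)^[t] x))| ≤ M := by
    intro πu πd t
    rcases min_choice (g ((cl f πu πd)^[t] x)) (l ((cl f πu πd)^[t] x)) with h | h <;> rw [h]
    · exact (hMg _).trans (le_max_left _ _)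
    · exact (hMl _).trans (le_max_right _ _)
  have hM0 : 0 ≤ M := (abs_nonneg _).trans (hkey (Classical.arbitrary _) (Classical.arbitrary _) 0)
  have hterm_lb : ∀ (πu : (Fin n → ℝ) → U) (πd : (Fin n → ℝ) → D) (t : ℕ),
      -M ≤ γ ^ t * min (g ((cl f πu πd)^[t] x)) (l ((cl f πu πd)^[t] x)) := by
    intro πu πd t
    have h1 := (abs_le.mp (hkey πu πd t)).1
    have h2 := pow_pos hγ0 t
    have h3 := hpow1 t
    nlinarith
  have hterm_ub : ∀ (πu : (Fin n → ℝ) → U) (πd : (Fin n → ℝ) → D) (t : ℕ),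
      γ ^ t * min (g ((cl f πu πd)^[t] x)) (l ((cl f πu πd)^[t] x)) ≤ γ ^ t * M := by
    intro πu πd t
    exact mul_le_mul_of_nonneg_left ((le_abs_self _).trans (hkey πu πd t)) (pow_pos hγ0 t).le
  have hI_lb : ∀ (πu : (Fin n → ℝ) → U) (πd : (Fin n → ℝ) → D),
      -M ≤ ⨅ t : ℕ, γ ^ t * min (g ((cl f πu πd)^[t] x)) (l ((cl f πu πd)^[t] x)) :=
    fun πu πd => le_ciInf (hterm_lb πu πd)
  have hI_le0 : ∀ (πu : (Fin n → ℝ) → U) (πd : (Fin n → ℝ) → D),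
      (⨅ t : ℕ, γ ^ t * min (g ((cl f πu πd)^[t] x)) (l ((cl f πu πd)^[t] x))) ≤ 0 := by
    intro πu πd
    have hb : BddBelow (Set.range fun t : ℕ =>
        γ ^ t * min (g ((cl f πu πd)^[t] x)) (l ((cl f πu πd)^[t] x))) :=
      ⟨-M, by rintro _ ⟨t, rfl⟩; exact hterm_lb πu πd t⟩
    have h1 : ∀ t : ℕ, (⨅ t : ℕ, γ ^ t * min (g ((cl f πu πd)^[t] x)) (l ((cl f πu πd)^[t] x)))
        ≤ γ ^ t * M := fun t => (ciInf_le hb t).trans (hterm_ub πu πd t)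
    have h2 : Filter.Tendsto (fun t : ℕ => γ ^ t * M) Filter.atTop (nhds 0) := by
      simpa using (tendsto_pow_atTop_nhds_zero_of_lt_one hγ0.le hγ1).mul_const M
    exact ge_of_tendsto' h2 h1
  have hJ_le0 : ∀ πu : (Fin n → ℝ) → U,
      (⨅ πd : (Fin n → ℝ) → D, ⨅ t : ℕ,
        γ ^ t * min (g ((cl f πu πd)^[t] x)) (l ((cl f πu πd)^[t] x))) ≤ 0 := by
    intro πu
    have hb : BddBelow (Set.range fun πd : (Fin n → ℝ) → D => ⨅ t : ℕ,
        γ ^ t * min (g ((cl f πu πd)^[t] x)) (l ((cl f πu πd)^[t] x))) :=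
      ⟨-M, by rintro _ ⟨πd, rfl⟩; exact hI_lb πu πd⟩
    exact ciInf_le_of_le hb (Classical.arbitrary _) (hI_le0 πu _)
  have hbdd : BddAbove (Set.range fun πu : (Fin n → ℝ) → U => ⨅ πd : (Fin n → ℝ) → D, ⨅ t : ℕ,
      γ ^ t * min (g ((cl f πu πd)^[t] x)) (l ((cl f πu πd)^[t] x))) :=
    ⟨0, by rintro _ ⟨πu, rfl⟩; exact hJ_le0 πu⟩
  obtain ⟨πu0, hπu0⟩ := hx
  have hge : 0 ≤ Hval U D f γ g l x := by
    have h0 : 0 ≤ ⨅ πd : (Fin n → ℝ) → D, ⨅ t : ℕ,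
        γ ^ t * min (g ((cl f πu0 πd)^[t] x)) (l ((cl f πu0 πd)^[t] x)) := by
      refine le_ciInf fun πd => le_ciInf fun t => ?_
      obtain ⟨hl', hg'⟩ := hπu0 πd t
      exact mul_nonneg (pow_pos hγ0 t).le (le_min hg'.le hl'.le)
    exact h0.trans (le_ciSup hbdd πu0)
  have hle : Hval U D f γ g l x ≤ 0 := ciSup_le hJ_le0
  linarith
end
end

section
/- If x belongs to the robust viability kernel AS, then H_g(x) = g(x) > 0. -/
open Set

noncomputable section

/-- if `x` belongs to the robust viability kernel `AS`,
then `H_g(x) = g(x) > 0`. -/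
theorem Hg_eq_g_pos_of_mem_AS {n mu md : ℕ} (U : Set (Fin mu → ℝ)) (D : Set (Fin md → ℝ))
    (hU : U.Nonempty) (hD : D.Nonempty)
    (f : (Fin n → ℝ) → (Fin mu → ℝ) → (Fin md → ℝ) → (Fin n → ℝ))
    (γ : ℝ) (hγ : γ ∈ Set.Ioo (0 : ℝ) 1)
    (g l : (Fin n → ℝ) → ℝ)
    (hg : ∃ M, ∀ y, |g y| ≤ M) (hl : ∃ M, ∀ y, |l y| ≤ M)
    (x : Fin n → ℝ) (hx : x ∈ ASset U D f g l) :
    Hg U D f γ g l x = g x ∧ 0 < g x := by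
  obtain ⟨πu, hπu⟩ := hx
  obtain ⟨d0, hd0⟩ := hD
  set πd0 : (Fin n → ℝ) → D := fun _ => ⟨d0, hd0⟩ with hπd0
  obtain ⟨Mg, hMg⟩ := hg
  obtain ⟨Ml, hMl⟩ := hl
  have hγ0 : 0 < γ := hγ.1
  have hγ1 : γ ≤ 1 := le_of_lt hγ.2
  set M : ℝ := max Mg Ml with hM
  have hM0 : 0 ≤ M := le_trans (abs_nonneg _) (le_trans (hMg x) (le_max_left _ _))
  have hgx : 0 < g x := by
    have := (hπu πd0 0).2
    simpa using this
  have hbound : ∀ (πu' : (Fin n → ℝ) → U) (πd : (Fin n → ℝ) → D) (t : ℕ),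
      -M ≤ γ ^ t * min (g ((cl f πu' πd)^[t] x)) (l ((cl f πu' πd)^[t] x)) ∧
      γ ^ t * min (g ((cl f πu' πd)^[t] x)) (l ((cl f πu' πd)^[t] x)) ≤ M := by
    intro πu' πd t
    set y := (cl f πu' πd)^[t] x
    have h1 : |min (g y) (l y)| ≤ M := by
      have h0 : |min (g y) (l y)| ≤ max |g y| |l y| := abs_min_le_max_abs_abs
      exact le_trans h0 (max_le_max (hMg y) (hMl y))
    have h2 : -M ≤ min (g y) (l y) := neg_le_of_abs_le h1
    have h3 : min (g y) (l y) ≤ M := le_of_abs_le h1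
    have hp : 0 < γ ^ t := pow_pos hγ0 t
    have hpl : γ ^ t ≤ 1 := pow_le_one₀ (le_of_lt hγ0) hγ1
    constructor
    · calc -M ≤ γ ^ t * (-M) := by nlinarith
        _ ≤ γ ^ t * min (g y) (l y) := by nlinarith
    · calc γ ^ t * min (g y) (l y) ≤ γ ^ t * M := by nlinarith
        _ ≤ M := by nlinarith
  have hHnn : 0 ≤ Hval U D f γ g l x := by
    have hinner : 0 ≤ ⨅ πd : (Fin n → ℝ) → D, ⨅ t : ℕ,
        γ ^ t * min (g ((cl f πu πd)^[t] x)) (l ((cl f πu πd)^[t] x)) := by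
      apply Real.iInf_nonneg
      intro πd
      apply Real.iInf_nonneg
      intro t
      have h := hπu πd t
      have : 0 < min (g ((cl f πu πd)^[t] x)) (l ((cl f πu πd)^[t] x)) :=
        lt_min h.2 h.1
      positivity
    have hbdd : BddAbove (Set.range fun πu' : (Fin n → ℝ) → U =>
        ⨅ πd : (Fin n → ℝ) → D, ⨅ t : ℕ,
          γ ^ t * min (g ((cl f πu' πd)^[t] x)) (l ((cl f πu' πd)^[t] x))) := by
      refine ⟨M, ?_⟩
      rintro _ ⟨πu', rfl⟩
      have hbb : BddBelow (Set.range fun πd : (Fin n → ℝ) → D => ⨅ t : ℕ,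
          γ ^ t * min (g ((cl f πu' πd)^[t] x)) (l ((cl f πu' πd)^[t] x))) := by
        refine ⟨-M, ?_⟩
        rintro _ ⟨πd, rfl⟩
        exact le_ciInf fun t => (hbound πu' πd t).1
      have h1 : (⨅ πd : (Fin n → ℝ) → D, ⨅ t : ℕ,
          γ ^ t * min (g ((cl f πu' πd)^[t] x)) (l ((cl f πu' πd)^[t] x))) ≤
          ⨅ t : ℕ, γ ^ t * min (g ((cl f πu' πd0)^[t] x)) (l ((cl f πu' πd0)^[t] x)) :=
        ciInf_le hbb πd0
      have h2 : (⨅ t : ℕ, γ ^ t * min (g ((cl f πu' πd0)^[t] x))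
          (l ((cl f πu' πd0)^[t] x))) ≤ M := by
        refine le_trans (ciInf_le ⟨-M, ?_⟩ 0) (hbound πu' πd0 0).2
        rintro _ ⟨t, rfl⟩
        exact (hbound πu' πd0 t).1
      exact le_trans h1 h2
    exact le_trans hinner (le_ciSup hbdd πu)
  refine ⟨?_, hgx⟩
  rw [Hg, if_neg (not_lt.mpr hHnn)]
end
end

section
/- Assume that the robust viability kernel coincides with the zero level set of H, i.e., AS = {x | H(x) = 0}. Then the super-zero level set of H_g equals the robust viability kernel: {x | H_g(x) > 0} = AS. -/
open Set

noncomputable section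

/-- if `AS = {x | H(x) = 0}`, then `{x | H_g(x) > 0} = AS`. -/
theorem superzero_Hg_eq_AS {n mu md : ℕ} (U : Set (Fin mu → ℝ)) (D : Set (Fin md → ℝ))
    (hU : U.Nonempty) (hD : D.Nonempty)
    (f : (Fin n → ℝ) → (Fin mu → ℝ) → (Fin md → ℝ) → (Fin n → ℝ))
    (γ : ℝ) (hγ : γ ∈ Set.Ioo (0 : ℝ) 1)
    (g l : (Fin n → ℝ) → ℝ)
    (hg : ∃ M, ∀ y, |g y| ≤ M) (hl : ∃ M, ∀ y, |l y| ≤ M)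
    (hAS : ASset U D f g l = {x | Hval U D f γ g l x = 0}) :
    {x | 0 < Hg U D f γ g l x} = ASset U D f g l := by
  obtain ⟨Mg, hMg⟩ := hg
  obtain ⟨Ml, hMl⟩ := hl
  obtain ⟨hγ0, hγ1⟩ := hγ
  set M := max Mg Ml with hMdef
  have hMnn : (0:ℝ) ≤ M :=
    le_trans (abs_nonneg (g 0)) (le_trans (hMg 0) (le_max_left _ _))
  have hNU : Nonempty U := hU.to_subtype
  have hND : Nonempty D := hD.to_subtype
  have hterm : ∀ (πu : (Fin n → ℝ) → U) (πd : (Fin n → ℝ) → D) (t : ℕ) (y : Fin n → ℝ),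
      -M ≤ γ ^ t * min (g ((cl f πu πd)^[t] y)) (l ((cl f πu πd)^[t] y)) ∧
      γ ^ t * min (g ((cl f πu πd)^[t] y)) (l ((cl f πu πd)^[t] y)) ≤ M := by
    intro πu πd t y
    set z := (cl f πu πd)^[t] y
    have hga := abs_le.mp (hMg z)
    have hla := abs_le.mp (hMl z)
    have hgM : |g z| ≤ M := le_trans (hMg z) (le_max_left _ _)
    have hlM : |l z| ≤ M := le_trans (hMl z) (le_max_right _ _)
    have hmin : |min (g z) (l z)| ≤ M := by
      rw [abs_le] at hgM hlM ⊢
      constructor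
      · exact le_min hgM.1 hlM.1
      · exact le_trans (min_le_left _ _) hgM.2
    have hpa : |γ ^ t| ≤ 1 := by
      rw [abs_of_nonneg (pow_nonneg hγ0.le t)]
      exact pow_le_one₀ hγ0.le hγ1.le
    have : |γ ^ t * min (g z) (l z)| ≤ M := by
      rw [abs_mul]
      calc |γ ^ t| * |min (g z) (l z)| ≤ 1 * M :=
            mul_le_mul hpa hmin (abs_nonneg _) zero_le_one
        _ = M := one_mul M
    exact abs_le.mp this
  -- inner infima bounds
  have hBbT : ∀ (πu : (Fin n → ℝ) → U) (πd : (Fin n → ℝ) → D) (y : Fin n → ℝ),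
      BddBelow (Set.range fun t : ℕ =>
        γ ^ t * min (g ((cl f πu πd)^[t] y)) (l ((cl f πu πd)^[t] y))) := by
    intro πu πd y
    exact ⟨-M, by rintro _ ⟨t, rfl⟩; exact (hterm πu πd t y).1⟩
  have hGlb : ∀ (πu : (Fin n → ℝ) → U) (πd : (Fin n → ℝ) → D) (y : Fin n → ℝ),
      -M ≤ ⨅ t : ℕ, γ ^ t * min (g ((cl f πu πd)^[t] y)) (l ((cl f πu πd)^[t] y)) :=
    fun πu πd y => le_ciInf fun t => (hterm πu πd t y).1
  have hGub : ∀ (πu : (Fin n → ℝ) → U) (πd : (Fin n → ℝ) → D) (y : Fin n → ℝ),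
      (⨅ t : ℕ, γ ^ t * min (g ((cl f πu πd)^[t] y)) (l ((cl f πu πd)^[t] y))) ≤ M :=
    fun πu πd y => le_trans (ciInf_le (hBbT πu πd y) 0) (hterm πu πd 0 y).2
  have hBbD : ∀ (πu : (Fin n → ℝ) → U) (y : Fin n → ℝ),
      BddBelow (Set.range fun πd : (Fin n → ℝ) → D =>
        ⨅ t : ℕ, γ ^ t * min (g ((cl f πu πd)^[t] y)) (l ((cl f πu πd)^[t] y))) := by
    intro πu y
    exact ⟨-M, by rintro _ ⟨πd, rfl⟩; exact hGlb πu πd y⟩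
  have hBaU : ∀ y : Fin n → ℝ,
      BddAbove (Set.range fun πu : (Fin n → ℝ) → U =>
        ⨅ πd : (Fin n → ℝ) → D, ⨅ t : ℕ,
          γ ^ t * min (g ((cl f πu πd)^[t] y)) (l ((cl f πu πd)^[t] y))) := by
    intro y
    refine ⟨M, ?_⟩
    rintro _ ⟨πu, rfl⟩
    exact le_trans (ciInf_le (hBbD πu y) (Classical.arbitrary _)) (hGub πu _ y)
  -- key: H x > 0 → x ∈ ASset
  have hkey : ∀ x : Fin n → ℝ, 0 < Hval U D f γ g l x → x ∈ ASset U D f g l := by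
    intro x hx
    rw [Hval, lt_ciSup_iff (hBaU x)] at hx
    obtain ⟨πu, hπu⟩ := hx
    refine ⟨πu, fun πd => fun t => ?_⟩
    have h1 : (0:ℝ) < ⨅ t : ℕ,
        γ ^ t * min (g ((cl f πu πd)^[t] x)) (l ((cl f πu πd)^[t] x)) :=
      lt_of_lt_of_le hπu (ciInf_le (hBbD πu x) πd)
    have h2 : (0:ℝ) < γ ^ t * min (g ((cl f πu πd)^[t] x)) (l ((cl f πu πd)^[t] x)) :=
      lt_of_lt_of_le h1 (ciInf_le (hBbT πu πd x) t)
    have hpt : (0:ℝ) < γ ^ t := pow_pos hγ0 t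
    have hmin : 0 < min (g ((cl f πu πd)^[t] x)) (l ((cl f πu πd)^[t] x)) := by
      by_contra hc
      push_neg at hc
      exact absurd h2 (not_lt.mpr (mul_nonpos_of_nonneg_of_nonpos hpt.le hc))
    exact ⟨lt_of_lt_of_le hmin (min_le_right _ _), lt_of_lt_of_le hmin (min_le_left _ _)⟩
  ext x
  simp only [Set.mem_setOf_eq]
  constructor
  · intro hx
    by_cases hH : Hval U D f γ g l x < 0
    · rw [Hg, if_pos hH] at hx; exact absurd hx (not_lt.mpr hH.le)
    · rcases eq_or_lt_of_le (not_lt.mp hH) with heq | hpos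
      · rw [hAS]; exact heq.symm
      · exact hkey x hpos
  · intro hx
    have hH0 : Hval U D f γ g l x = 0 := by rw [hAS] at hx; exact hx
    rw [Hg, if_neg (by rw [hH0]; exact lt_irrefl 0), ]
    obtain ⟨πu, hπu⟩ := hx
    have := (hπu (fun _ => ⟨hD.choose, hD.choose_spec⟩) 0).2
    simpa using this
end
end

section
/- The discounted value function V satisfies the Bellman equation: for every x ∈ ℝⁿ, V(x) = min( l(x), max( H_g(x), γ · sup over u ∈ U of inf over d ∈ D of V(f(x,u,d)) ) ). -/
open Set

noncomputable section

theorem fin_iInf_succ {m : ℕ} (φ : Fin (m + 2) → ℝ) :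
    (⨅ s, φ s) = min (φ 0) (⨅ s : Fin (m + 1), φ s.succ) := by
  have bdd : BddBelow (range φ) := (Set.finite_range φ).bddBelow
  have bdd' : BddBelow (range fun s : Fin (m + 1) => φ s.succ) := (Set.finite_range _).bddBelow
  apply le_antisymm
  · exact le_min (ciInf_le bdd 0) (le_ciInf fun s => ciInf_le bdd s.succ)
  · apply le_ciInf
    intro s
    rcases Fin.eq_zero_or_eq_succ s with h | ⟨j, rfl⟩
    · rw [h]; exact min_le_left _ _
    · exact le_trans (min_le_right _ _) (ciInf_le bdd' j)

theorem nat_iSup_succ (ψ : ℕ → ℝ) (bdd : BddAbove (range ψ)) :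
    (⨆ t, ψ t) = max (ψ 0) (⨆ t, ψ (t + 1)) := by
  have bdd' : BddAbove (range fun t => ψ (t + 1)) := by
    obtain ⟨b, hb⟩ := bdd; exact ⟨b, by rintro y ⟨t, rfl⟩; exact hb ⟨t + 1, rfl⟩⟩
  apply le_antisymm
  · apply ciSup_le; intro t
    cases t with
    | zero => exact le_max_left _ _
    | succ t => exact le_trans (le_ciSup bdd' t) (le_max_right _ _)
  · exact max_le (le_ciSup bdd 0) (ciSup_le fun t => le_ciSup bdd (t + 1))

namespace VB

theorem abs_ciSup_le {ι : Sort*} [Nonempty ι] {f : ι → ℝ} {M : ℝ} (h : ∀ i, |f i| ≤ M) :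
    |⨆ i, f i| ≤ M := by
  rw [abs_le]
  constructor
  · exact le_trans (abs_le.1 (h (Classical.arbitrary ι))).1
      (le_ciSup ⟨M, by rintro y ⟨i, rfl⟩; exact (abs_le.1 (h i)).2⟩ _)
  · exact ciSup_le fun i => (abs_le.1 (h i)).2

theorem abs_ciInf_le {ι : Sort*} [Nonempty ι] {f : ι → ℝ} {M : ℝ} (h : ∀ i, |f i| ≤ M) :
    |⨅ i, f i| ≤ M := by
  rw [abs_le]
  constructor
  · exact le_ciInf fun i => (abs_le.1 (h i)).1
  · exact le_trans (ciInf_le ⟨-M, by rintro y ⟨i, rfl⟩; exact (abs_le.1 (h i)).1⟩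
      (Classical.arbitrary ι)) (abs_le.1 (h (Classical.arbitrary ι))).2

theorem bddAbove_of_abs {ι : Sort*} {f : ι → ℝ} {M : ℝ} (h : ∀ i, |f i| ≤ M) :
    BddAbove (Set.range f) := ⟨M, by rintro y ⟨i, rfl⟩; exact (abs_le.1 (h i)).2⟩

theorem bddBelow_of_abs {ι : Sort*} {f : ι → ℝ} {M : ℝ} (h : ∀ i, |f i| ≤ M) :
    BddBelow (Set.range f) := ⟨-M, by rintro y ⟨i, rfl⟩; exact (abs_le.1 (h i)).1⟩

variable {n mu md : ℕ} {U : Set (Fin mu → ℝ)} {D : Set (Fin md → ℝ)}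

def term (f : (Fin n → ℝ) → (Fin mu → ℝ) → (Fin md → ℝ) → (Fin n → ℝ))
    (γ : ℝ) (h l : (Fin n → ℝ) → ℝ)
    (πu : (Fin n → ℝ) → U) (πd : (Fin n → ℝ) → D) (x : Fin n → ℝ) (t : ℕ) : ℝ :=
  min (γ ^ t * h ((cl f πu πd)^[t] x))
    (⨅ s : Fin (t + 1), γ ^ (s : ℕ) * l ((cl f πu πd)^[(s : ℕ)] x))

def J (f : (Fin n → ℝ) → (Fin mu → ℝ) → (Fin md → ℝ) → (Fin n → ℝ))
    (γ : ℝ) (h l : (Fin n → ℝ) → ℝ)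
    (πu : (Fin n → ℝ) → U) (πd : (Fin n → ℝ) → D) (x : Fin n → ℝ) : ℝ :=
  ⨆ t : ℕ, term f γ h l πu πd x t



theorem abs_min_const_sub (a b c : ℝ) : |min c a - min c b| ≤ |a - b| := by
  refine le_trans (abs_min_sub_min_le_max c a c b) ?_
  simp

theorem abs_max_const_sub (a b c : ℝ) : |max c a - max c b| ≤ |a - b| := by
  rw [max_comm c a, max_comm c b]
  exact abs_max_sub_max_le_abs a b c

/-- one-step Bellman-type map at a state -/
def Phi (γ : ℝ) (h l : α → ℝ) (z : α) (b : ℝ) : ℝ := min (l z) (max (h z) (γ * b))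

theorem Phi_mono {γ : ℝ} (hγ0 : 0 < γ) (h l : α → ℝ) (z : α) : Monotone (Phi γ h l z) :=
  fun a b hab => min_le_min le_rfl (max_le_max le_rfl (mul_le_mul_of_nonneg_left hab hγ0.le))

theorem Phi_lip {γ : ℝ} (hγ0 : 0 < γ) (h l : α → ℝ) (z : α) (a b : ℝ) :
    |Phi γ h l z a - Phi γ h l z b| ≤ γ * |a - b| := by
  unfold Phi
  refine le_trans (abs_min_const_sub _ _ _) (le_trans (abs_max_const_sub _ _ _) ?_)
  rw [← mul_sub, abs_mul, abs_of_pos hγ0]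

/-- composition of `Phi`s along a sequence of states:
`Cseq z m = Phi (z 0) ∘ Phi (z 1) ∘ ... ∘ Phi (z m)` -/
def Cseq (γ : ℝ) (h l : α → ℝ) (z : ℕ → α) : ℕ → ℝ → ℝ
  | 0 => Phi γ h l (z 0)
  | m + 1 => fun b => Cseq γ h l z m (Phi γ h l (z (m + 1)) b)

theorem Cseq_congr (γ : ℝ) (h l : α → ℝ) {z z' : ℕ → α} : ∀ (m : ℕ),
    (∀ j ≤ m, z j = z' j) → Cseq γ h l z m = Cseq γ h l z' m := by
  intro m
  induction m with
  | zero => intro hz; unfold Cseq; rw [hz 0 le_rfl]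
  | succ m ih =>
    intro hz
    funext b
    show Cseq γ h l z m _ = Cseq γ h l z' m _
    rw [ih (fun j hj => hz j (le_trans hj (Nat.le_succ m))), hz (m + 1) le_rfl]

theorem Cseq_mono {γ : ℝ} (hγ0 : 0 < γ) (h l : α → ℝ) (z : ℕ → α) (m : ℕ) :
    Monotone (Cseq γ h l z m) := by
  induction m with
  | zero => exact Phi_mono hγ0 h l (z 0)
  | succ m ih => exact fun a b hab => ih (Phi_mono hγ0 h l (z (m + 1)) hab)

theorem Cseq_lip {γ : ℝ} (hγ0 : 0 < γ) (hγ1 : γ < 1) (h l : α → ℝ) (z : ℕ → α) (m : ℕ)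
    (a b : ℝ) : |Cseq γ h l z m a - Cseq γ h l z m b| ≤ γ * |a - b| := by
  induction m generalizing a b with
  | zero => exact Phi_lip hγ0 h l (z 0) a b
  | succ m ih =>
    show |Cseq γ h l z m _ - Cseq γ h l z m _| ≤ _
    refine le_trans (ih _ _) ?_
    have := Phi_lip hγ0 h l (z (m + 1)) a b
    nlinarith [abs_nonneg (a - b), abs_nonneg (Phi γ h l (z (m + 1)) a - Phi γ h l (z (m + 1)) b)]

/-- the fixed-point comparison lemma -/
theorem fix_lemma {γ : ℝ} (hγ1 : γ < 1) {F : ℝ → ℝ} (mono : Monotone F)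
    (lip : ∀ a b, |F a - F b| ≤ γ * |a - b|) {a : ℝ} (hfix : F a = a) (b : ℝ) :
    min a b ≤ F b ∧ F b ≤ max a b := by
  rcases le_total b a with hba | hab
  · constructor
    · rw [min_eq_right hba]
      have h1 := lip a b
      rw [hfix, abs_of_nonneg (sub_nonneg.2 hba)] at h1
      have h2 := (abs_le.1 h1).2
      nlinarith
    · exact le_trans (mono hba) (le_of_eq hfix) |>.trans (le_max_left a b)
  · constructor
    · exact le_trans (min_le_left a b) (le_of_eq hfix.symm) |>.trans (mono hab)
    · rw [max_eq_right hab]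
      have h1 := lip b a
      rw [hfix, abs_of_nonneg (sub_nonneg.2 hab)] at h1
      have h2 := (abs_le.1 h1).2
      nlinarith



def Vf (U : Set (Fin mu → ℝ)) (D : Set (Fin md → ℝ))
    (f : (Fin n → ℝ) → (Fin mu → ℝ) → (Fin md → ℝ) → (Fin n → ℝ))
    (γ : ℝ) (h l : (Fin n → ℝ) → ℝ) (x : Fin n → ℝ) : ℝ :=
  ⨆ πu : (Fin n → ℝ) → U, ⨅ πd : (Fin n → ℝ) → D, J f γ h l πu πd x

def Qf (U : Set (Fin mu → ℝ)) (D : Set (Fin md → ℝ))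
    (f : (Fin n → ℝ) → (Fin mu → ℝ) → (Fin md → ℝ) → (Fin n → ℝ))
    (γ : ℝ) (h l : (Fin n → ℝ) → ℝ) (x : Fin n → ℝ) : ℝ :=
  ⨆ u : U, ⨅ d : D, Vf U D f γ h l (f x (u : Fin mu → ℝ) (d : Fin md → ℝ))

def Sf (U : Set (Fin mu → ℝ)) (D : Set (Fin md → ℝ))
    (f : (Fin n → ℝ) → (Fin mu → ℝ) → (Fin md → ℝ) → (Fin n → ℝ))
    (γ : ℝ) (h l : (Fin n → ℝ) → ℝ) (x : Fin n → ℝ) : ℝ :=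
  ⨆ πu : (Fin n → ℝ) → U, ⨅ πd : (Fin n → ℝ) → D,
    J f γ h l πu πd (f x ((πu x : U) : Fin mu → ℝ) ((πd x : D) : Fin md → ℝ))

section main
variable (f : (Fin n → ℝ) → (Fin mu → ℝ) → (Fin md → ℝ) → (Fin n → ℝ))
  (γ : ℝ) (h l : (Fin n → ℝ) → ℝ) {M : ℝ}
  (hγ0 : 0 < γ) (hγ1 : γ < 1)
  (hh : ∀ y, |h y| ≤ M) (hl : ∀ y, |l y| ≤ M)
  [Nonempty U] [Nonempty D]

theorem term_zero (πu : (Fin n → ℝ) → U) (πd : (Fin n → ℝ) → D) (x : Fin n → ℝ) :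
    term f γ h l πu πd x 0 = min (h x) (l x) := by
  unfold term
  haveI : Unique (Fin (0 + 1)) := inferInstanceAs (Unique (Fin 1))
  rw [ciInf_unique]
  norm_num

include hγ0 in
theorem term_succ (πu : (Fin n → ℝ) → U) (πd : (Fin n → ℝ) → D) (x : Fin n → ℝ) (t : ℕ) :
    term f γ h l πu πd x (t + 1) =
      min (l x) (γ * term f γ h l πu πd (cl f πu πd x) t) := by
  unfold term
  have e1 : γ ^ (t + 1) * h ((cl f πu πd)^[t + 1] x)
      = γ * (γ ^ t * h ((cl f πu πd)^[t] (cl f πu πd x))) := by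
    rw [Function.iterate_succ_apply, pow_succ]; ring
  have e2 : (⨅ s : Fin (t + 1 + 1), γ ^ (s : ℕ) * l ((cl f πu πd)^[(s : ℕ)] x))
      = min (l x) (γ * ⨅ s : Fin (t + 1), γ ^ (s : ℕ) * l ((cl f πu πd)^[(s : ℕ)] (cl f πu πd x))) := by
    rw [fin_iInf_succ]
    congr 1
    · norm_num
    · have hmap := Monotone.map_ciInf_of_continuousAt
        (f := fun z : ℝ => γ * z)
        (g := fun s : Fin (t + 1) => γ ^ (s : ℕ) * l ((cl f πu πd)^[(s : ℕ)] (cl f πu πd x)))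
        ((continuous_const.mul continuous_id).continuousAt)
        (fun a b hab => mul_le_mul_of_nonneg_left hab hγ0.le)
        ((Set.finite_range _).bddBelow)
      have hmap' : γ * (⨅ s : Fin (t + 1), γ ^ (s : ℕ) * l ((cl f πu πd)^[(s : ℕ)] (cl f πu πd x)))
          = ⨅ s : Fin (t + 1), γ * (γ ^ (s : ℕ) * l ((cl f πu πd)^[(s : ℕ)] (cl f πu πd x))) := hmap
      rw [hmap']
      apply iInf_congr
      intro s
      rw [Fin.val_succ, Function.iterate_succ_apply, pow_succ]
      ring
  rw [e1, e2, min_left_comm, ← mul_min_of_nonneg _ _ hγ0.le]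

include hγ0 hγ1 hh hl in
theorem abs_term_le (πu : (Fin n → ℝ) → U) (πd : (Fin n → ℝ) → D) (x : Fin n → ℝ) (t : ℕ) :
    |term f γ h l πu πd x t| ≤ M := by
  have hγt : ∀ t : ℕ, |γ ^ t| ≤ 1 := by
    intro t
    rw [abs_pow, abs_of_pos hγ0]
    exact pow_le_one₀ hγ0.le hγ1.le
  have key : ∀ (z : Fin n → ℝ) (t : ℕ) (p : (Fin n → ℝ) → ℝ), (∀ y, |p y| ≤ M) →
      |γ ^ t * p z| ≤ M := by
    intro z t p hp
    rw [abs_mul]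
    calc |γ ^ t| * |p z| ≤ 1 * M :=
      mul_le_mul (hγt t) (hp z) (abs_nonneg _) zero_le_one
    _ = M := one_mul M
  have h1 : |γ ^ t * h ((cl f πu πd)^[t] x)| ≤ M := key _ _ _ hh
  have h2 : |⨅ s : Fin (t + 1), γ ^ (s : ℕ) * l ((cl f πu πd)^[(s : ℕ)] x)| ≤ M := by
    apply abs_le.2
    constructor
    · exact le_ciInf fun s => (abs_le.1 (key _ _ _ hl)).1
    · exact le_trans (ciInf_le ((Set.finite_range _).bddBelow) 0) (abs_le.1 (key _ _ _ hl)).2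
  rw [abs_le] at h1 h2 ⊢
  exact ⟨le_min h1.1 h2.1, le_trans (min_le_left _ _) h1.2⟩

include hγ0 hγ1 hh hl in
theorem abs_J_le (πu : (Fin n → ℝ) → U) (πd : (Fin n → ℝ) → D) (x : Fin n → ℝ) :
    |J f γ h l πu πd x| ≤ M := by
  unfold J
  exact (by
    have : Nonempty ℕ := inferInstance
    exact abs_le.2 ⟨by
      refine le_trans (abs_le.1 (abs_term_le f γ h l hγ0 hγ1 hh hl πu πd x 0)).1 ?_
      exact le_ciSup (⟨M, by rintro y ⟨t, rfl⟩; exact (abs_le.1 (abs_term_le f γ h l hγ0 hγ1 hh hl πu πd x t)).2⟩) 0,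
      ciSup_le fun t => (abs_le.1 (abs_term_le f γ h l hγ0 hγ1 hh hl πu πd x t)).2⟩)

include hγ0 hγ1 hh hl in
theorem J_rec (πu : (Fin n → ℝ) → U) (πd : (Fin n → ℝ) → D) (x : Fin n → ℝ) :
    J f γ h l πu πd x =
      min (l x) (max (h x) (γ * J f γ h l πu πd (cl f πu πd x))) := by
  have bdd : BddAbove (range fun t => term f γ h l πu πd x t) :=
    ⟨M, by rintro y ⟨t, rfl⟩; exact (abs_le.1 (abs_term_le f γ h l hγ0 hγ1 hh hl πu πd x t)).2⟩
  have bddc : BddAbove (range fun t => term f γ h l πu πd (cl f πu πd x) t) :=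
    ⟨M, by rintro y ⟨t, rfl⟩; exact (abs_le.1 (abs_term_le f γ h l hγ0 hγ1 hh hl πu πd _ t)).2⟩
  have step1 : J f γ h l πu πd x
      = max (term f γ h l πu πd x 0) (⨆ t, term f γ h l πu πd x (t + 1)) :=
    nat_iSup_succ _ bdd
  have step2 : (⨆ t, term f γ h l πu πd x (t + 1))
      = ⨆ t, min (l x) (γ * term f γ h l πu πd (cl f πu πd x) t) :=
    iSup_congr (term_succ f γ h l hγ0 πu πd x)
  have step3 : (⨆ t, min (l x) (γ * term f γ h l πu πd (cl f πu πd x) t))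
      = min (l x) (γ * J f γ h l πu πd (cl f πu πd x)) := by
    have hmap := Monotone.map_ciSup_of_continuousAt
      (f := fun z : ℝ => min (l x) (γ * z))
      (g := fun t : ℕ => term f γ h l πu πd (cl f πu πd x) t)
      ((continuous_const.min (continuous_const.mul continuous_id)).continuousAt)
      (fun a b hab => min_le_min le_rfl (mul_le_mul_of_nonneg_left hab hγ0.le))
      bddc
    have hmap' : min (l x) (γ * ⨆ t, term f γ h l πu πd (cl f πu πd x) t)
        = ⨆ t, min (l x) (γ * term f γ h l πu πd (cl f πu πd x) t) := hmap
    rw [← hmap']; rfl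
  rw [step1, step2, step3, term_zero, min_max_distrib_left, min_comm (l x) (h x)]

include hγ0 hγ1 hh hl in
theorem J_rec_Phi (πu : (Fin n → ℝ) → U) (πd : (Fin n → ℝ) → D) (x : Fin n → ℝ) :
    J f γ h l πu πd x = Phi γ h l x (J f γ h l πu πd (cl f πu πd x)) :=
  J_rec f γ h l hγ0 hγ1 hh hl πu πd x

include hγ0 hγ1 hh hl in
theorem Cseq_J (πu : (Fin n → ℝ) → U) (πd : (Fin n → ℝ) → D) (x : Fin n → ℝ) (m : ℕ) :
    J f γ h l πu πd x =
      Cseq γ h l (fun j => (cl f πu πd)^[j] x) m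
        (J f γ h l πu πd ((cl f πu πd)^[m + 1] x)) := by
  induction m with
  | zero =>
    show _ = Phi γ h l ((cl f πu πd)^[0] x) _
    rw [Function.iterate_zero_apply, Function.iterate_one]
    exact J_rec_Phi f γ h l hγ0 hγ1 hh hl πu πd x
  | succ m ih =>
    show _ = Cseq γ h l _ m (Phi γ h l ((cl f πu πd)^[m + 1] x) _)
    have key : Phi γ h l ((cl f πu πd)^[m + 1] x)
        (J f γ h l πu πd ((cl f πu πd)^[m + 1 + 1] x))
        = J f γ h l πu πd ((cl f πu πd)^[m + 1] x) := by
      rw [Function.iterate_succ_apply' (cl f πu πd) (m + 1) x]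
      exact (J_rec_Phi f γ h l hγ0 hγ1 hh hl πu πd ((cl f πu πd)^[m + 1] x)).symm
    rw [key]
    exact ih

theorem iter_agree (πu : (Fin n → ℝ) → U) (πd πd' : (Fin n → ℝ) → D) (x y : Fin n → ℝ)
    (hagree : ∀ z, z ≠ x → πd z = πd' z) :
    ∀ j, (∀ i < j, (cl f πu πd)^[i] y ≠ x) → (cl f πu πd)^[j] y = (cl f πu πd')^[j] y := by
  intro j
  induction j with
  | zero => intro _; rfl
  | succ j ih =>
    intro hne
    rw [Function.iterate_succ_apply', Function.iterate_succ_apply']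
    have hz : (cl f πu πd)^[j] y ≠ x := hne j (Nat.lt_succ_self j)
    have h1 : cl f πu πd ((cl f πu πd)^[j] y) = cl f πu πd' ((cl f πu πd)^[j] y) := by
      show f _ _ (((πd ((cl f πu πd)^[j] y)) : D) : Fin md → ℝ) = f _ _ _
      rw [hagree _ hz]
    rw [h1, ih (fun i hi => hne i (Nat.lt_succ_of_lt hi))]

theorem J_congr (πu : (Fin n → ℝ) → U) (πd πd' : (Fin n → ℝ) → D) (y : Fin n → ℝ)
    (hiter : ∀ t, (cl f πu πd)^[t] y = (cl f πu πd')^[t] y) :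
    J f γ h l πu πd y = J f γ h l πu πd' y := by
  unfold J term
  exact iSup_congr fun t => by
    rw [hiter t]
    congr 1
    exact iInf_congr fun s => by rw [hiter (s : ℕ)]

include hγ0 hγ1 hh hl in
theorem surgery (πu : (Fin n → ℝ) → U) (πd' : (Fin n → ℝ) → D) (d : D) (x : Fin n → ℝ) :
    (⨅ πd : (Fin n → ℝ) → D, J f γ h l πu πd (f x (πu x) ((πd x) : Fin md → ℝ))) ≤
      J f γ h l πu πd' (f x (πu x) (d : Fin md → ℝ)) := by
  classical
  set u := πu x with hu
  set y := f x (u : Fin mu → ℝ) (d : Fin md → ℝ) with hy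
  set πd₀ := Function.update πd' x d with hπd₀
  have hπd₀x : πd₀ x = d := Function.update_self x d πd'
  have hagree : ∀ z, z ≠ x → πd₀ z = πd' z := fun z hz => Function.update_of_ne hz d πd'
  have bddI : BddBelow (range fun πd : (Fin n → ℝ) → D =>
      J f γ h l πu πd (f x (πu x) ((πd x) : Fin md → ℝ))) :=
    ⟨-M, by rintro v ⟨πd, rfl⟩; exact (abs_le.1 (abs_J_le f γ h l hγ0 hγ1 hh hl πu πd _)).1⟩
  have hstart : f x (πu x) ((πd₀ x : D) : Fin md → ℝ) = y := by rw [hπd₀x]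
  by_cases hx : ∃ j, (cl f πu πd₀)^[j] y = x
  · -- the deviated trajectory returns to x: loop analysis
    set k := Nat.find hx with hkdef
    have hk : (cl f πu πd₀)^[k] y = x := Nat.find_spec hx
    have hmin : ∀ j < k, (cl f πu πd₀)^[j] y ≠ x := fun j hj => Nat.find_min hx hj
    have hk1 : (cl f πu πd₀)^[k + 1] y = y := by
      rw [Function.iterate_succ_apply', hk]
      show f x (πu x) ((πd₀ x : D) : Fin md → ℝ) = y
      exact hstart
    have hagree_iter : ∀ j ≤ k, (cl f πu πd₀)^[j] y = (cl f πu πd')^[j] y := fun j hj =>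
      iter_agree f πu πd₀ πd' x y hagree j (fun i hi => hmin i (lt_of_lt_of_le hi hj))
    set z : ℕ → (Fin n → ℝ) := fun j => (cl f πu πd₀)^[j] y with hzdef
    have hagree_iter' : ∀ j ≤ k, z j = (cl f πu πd')^[j] y := hagree_iter
    have hCfix : Cseq γ h l z k (J f γ h l πu πd₀ y) = J f γ h l πu πd₀ y := by
      have hh2 := Cseq_J f γ h l hγ0 hγ1 hh hl πu πd₀ y k
      rw [hk1] at hh2
      exact hh2.symm
    have hw : (cl f πu πd')^[k + 1] y = f x (πu x) ((πd' x : D) : Fin md → ℝ) := by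
      rw [Function.iterate_succ_apply', ← hagree_iter k le_rfl, hk]
      rfl
    have hC' : J f γ h l πu πd' y =
        Cseq γ h l z k (J f γ h l πu πd' ((cl f πu πd')^[k + 1] y)) := by
      have hh3 := Cseq_J f γ h l hγ0 hγ1 hh hl πu πd' y k
      rwa [Cseq_congr γ h l k (fun j hj => (hagree_iter' j hj).symm)] at hh3
    obtain ⟨h1, _⟩ := fix_lemma hγ1 (Cseq_mono hγ0 h l z k)
      (Cseq_lip hγ0 hγ1 h l z k) hCfix (J f γ h l πu πd' ((cl f πu πd')^[k + 1] y))
    rw [← hC'] at h1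
    rcases le_total (J f γ h l πu πd₀ y) (J f γ h l πu πd' ((cl f πu πd')^[k + 1] y)) with hc | hc
    · refine le_trans (ciInf_le bddI πd₀) ?_
      rw [hstart]
      rw [min_eq_left hc] at h1
      exact h1
    · refine le_trans (ciInf_le bddI πd') ?_
      rw [min_eq_right hc] at h1
      rw [← hw]
      exact h1
  · -- the deviated trajectory avoids x
    push_neg at hx
    have hiter : ∀ t, (cl f πu πd₀)^[t] y = (cl f πu πd')^[t] y := fun t =>
      iter_agree f πu πd₀ πd' x y hagree t (fun i _ => hx i)
    have heq : J f γ h l πu πd₀ y = J f γ h l πu πd' y :=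
      J_congr f γ h l πu πd₀ πd' y hiter
    refine le_trans (ciInf_le bddI πd₀) ?_
    rw [hstart, heq]

omit hγ0 hγ1 hh hl in
theorem shiftE (a b c E : ℝ) (hE : E ≤ 0) : min a (max b c) + E ≤ min a (max b (c + E)) := by
  rw [← min_add_add_right, ← max_add_add_right]
  exact min_le_min (by linarith) (max_le_max (by linarith) le_rfl)

include hγ0 hγ1 hh hl in
theorem abs_iInfJ_le (πu : (Fin n → ℝ) → U) (x : Fin n → ℝ) :
    |⨅ πd : (Fin n → ℝ) → D, J f γ h l πu πd x| ≤ M :=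
  abs_ciInf_le fun πd => abs_J_le f γ h l hγ0 hγ1 hh hl πu πd x

include hγ0 hγ1 hh hl in
theorem abs_Vf_le (x : Fin n → ℝ) : |Vf U D f γ h l x| ≤ M :=
  abs_ciSup_le fun πu => abs_iInfJ_le f γ h l hγ0 hγ1 hh hl πu x

include hγ0 hγ1 hh hl in
theorem abs_iInfJS_le (πu : (Fin n → ℝ) → U) (x : Fin n → ℝ) :
    |⨅ πd : (Fin n → ℝ) → D,
      J f γ h l πu πd (f x ((πu x : U) : Fin mu → ℝ) ((πd x : D) : Fin md → ℝ))| ≤ M :=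
  abs_ciInf_le fun πd => abs_J_le f γ h l hγ0 hγ1 hh hl πu πd _

include hγ0 hγ1 hh hl in
theorem abs_Sf_le (x : Fin n → ℝ) : |Sf U D f γ h l x| ≤ M :=
  abs_ciSup_le fun πu => abs_iInfJS_le f γ h l hγ0 hγ1 hh hl πu x

include hγ0 hγ1 hh hl in
theorem abs_iInfV_le (x : Fin n → ℝ) (u : U) :
    |⨅ d : D, Vf U D f γ h l (f x (u : Fin mu → ℝ) (d : Fin md → ℝ))| ≤ M :=
  abs_ciInf_le fun d => abs_Vf_le f γ h l hγ0 hγ1 hh hl _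

include hγ0 hγ1 hh hl in
theorem abs_Qf_le (x : Fin n → ℝ) : |Qf U D f γ h l x| ≤ M :=
  abs_ciSup_le fun u => abs_iInfV_le f γ h l hγ0 hγ1 hh hl x u

include hγ0 hγ1 hh hl in
theorem V_rec (x : Fin n → ℝ) : Vf U D f γ h l x = Phi γ h l x (Sf U D f γ h l x) := by
  have contPhi : Continuous (Phi γ h l x) :=
    continuous_const.min (continuous_const.max (continuous_const.mul continuous_id))
  have step1 : ∀ πu : (Fin n → ℝ) → U,
      (⨅ πd : (Fin n → ℝ) → D, J f γ h l πu πd x) =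
        Phi γ h l x (⨅ πd : (Fin n → ℝ) → D,
          J f γ h l πu πd (f x ((πu x : U) : Fin mu → ℝ) ((πd x : D) : Fin md → ℝ))) := by
    intro πu
    have hmap := Monotone.map_ciInf_of_continuousAt
      (f := Phi γ h l x)
      (g := fun πd : (Fin n → ℝ) → D =>
        J f γ h l πu πd (f x ((πu x : U) : Fin mu → ℝ) ((πd x : D) : Fin md → ℝ)))
      contPhi.continuousAt (Phi_mono hγ0 h l x)
      (bddBelow_of_abs fun πd => abs_J_le f γ h l hγ0 hγ1 hh hl πu πd _)
    rw [hmap]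
    exact iInf_congr fun πd => J_rec_Phi f γ h l hγ0 hγ1 hh hl πu πd x
  have step2 := Monotone.map_ciSup_of_continuousAt
    (f := Phi γ h l x)
    (g := fun πu : (Fin n → ℝ) → U => ⨅ πd : (Fin n → ℝ) → D,
      J f γ h l πu πd (f x ((πu x : U) : Fin mu → ℝ) ((πd x : D) : Fin md → ℝ)))
    contPhi.continuousAt (Phi_mono hγ0 h l x)
    (bddAbove_of_abs fun πu => abs_iInfJS_le f γ h l hγ0 hγ1 hh hl πu x)
  calc Vf U D f γ h l x = ⨆ πu : (Fin n → ℝ) → U, Phi γ h l x (⨅ πd : (Fin n → ℝ) → D,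
        J f γ h l πu πd (f x ((πu x : U) : Fin mu → ℝ) ((πd x : D) : Fin md → ℝ))) :=
      iSup_congr step1
    _ = Phi γ h l x (Sf U D f γ h l x) := step2.symm

include hγ0 hγ1 hh hl in
theorem S_le_Q (x : Fin n → ℝ) : Sf U D f γ h l x ≤ Qf U D f γ h l x := by
  apply ciSup_le
  intro πu
  refine le_trans (le_ciInf fun d => ?_)
    (le_ciSup (bddAbove_of_abs fun u => abs_iInfV_le f γ h l hγ0 hγ1 hh hl x u) (πu x))
  refine le_trans (le_ciInf fun πd' => surgery f γ h l hγ0 hγ1 hh hl πu πd' d x) ?_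
  exact le_ciSup (bddAbove_of_abs fun πu' => abs_iInfJ_le f γ h l hγ0 hγ1 hh hl πu' _) πu

include hγ0 hγ1 hh hl in
theorem V_le_TV (x : Fin n → ℝ) : Vf U D f γ h l x ≤ Phi γ h l x (Qf U D f γ h l x) := by
  rw [V_rec f γ h l hγ0 hγ1 hh hl x]
  exact Phi_mono hγ0 h l x (S_le_Q f γ h l hγ0 hγ1 hh hl x)

include hγ0 hγ1 hh hl in
theorem greedy_good {ε : ℝ} (hε : 0 < ε) (πu : (Fin n → ℝ) → U)
    (hgreedy : ∀ y, Qf U D f γ h l y - (1 - γ) * ε ≤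
      ⨅ d : D, Vf U D f γ h l (f y ((πu y : U) : Fin mu → ℝ) (d : Fin md → ℝ))) :
    ∀ (πd : (Fin n → ℝ) → D) (y : Fin n → ℝ),
      Vf U D f γ h l y - ε ≤ J f γ h l πu πd y := by
  set ε' := (1 - γ) * ε with hε'
  have hε'0 : 0 ≤ ε' := by nlinarith
  set Δ := ⨅ p : (((Fin n → ℝ) → D) × (Fin n → ℝ)),
    (J f γ h l πu p.1 p.2 - Vf U D f γ h l p.2) with hΔ
  have bddΔ : BddBelow (range fun p : (((Fin n → ℝ) → D) × (Fin n → ℝ)) =>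
      J f γ h l πu p.1 p.2 - Vf U D f γ h l p.2) := by
    refine ⟨-(2 * M), ?_⟩
    rintro v ⟨p, rfl⟩
    have h1 := abs_le.1 (abs_J_le f γ h l hγ0 hγ1 hh hl πu p.1 p.2)
    have h2 := abs_le.1 (abs_Vf_le (U := U) (D := D) f γ h l hγ0 hγ1 hh hl p.2)
    simp only
    linarith [h1.1, h2.2]
  have key : ∀ (πd : (Fin n → ℝ) → D) (y : Fin n → ℝ),
      Vf U D f γ h l y + min 0 (γ * Δ - ε') ≤ J f γ h l πu πd y := by
    intro πd y
    set E := min 0 (γ * Δ - ε') with hE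
    have hE0 : E ≤ 0 := min_le_left _ _
    have hJ1 : Vf U D f γ h l (cl f πu πd y) + Δ ≤ J f γ h l πu πd (cl f πu πd y) := by
      have := ciInf_le bddΔ (πd, cl f πu πd y)
      simp only at this
      linarith
    have hV1 : (⨅ d : D, Vf U D f γ h l (f y ((πu y : U) : Fin mu → ℝ) (d : Fin md → ℝ)))
        ≤ Vf U D f γ h l (cl f πu πd y) := by
      exact ciInf_le (bddBelow_of_abs fun d : D =>
        abs_Vf_le (U := U) (D := D) f γ h l hγ0 hγ1 hh hl
          (f y ((πu y : U) : Fin mu → ℝ) (d : Fin md → ℝ))) (πd y)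
    have hchain : γ * Qf U D f γ h l y + E ≤ γ * J f γ h l πu πd (cl f πu πd y) := by
      have hq := hgreedy y
      have h5 : Qf U D f γ h l y - ε' + Δ ≤ J f γ h l πu πd (cl f πu πd y) := by
        calc Qf U D f γ h l y - ε' + Δ ≤ Vf U D f γ h l (cl f πu πd y) + Δ := by
              linarith [le_trans hq hV1]
          _ ≤ _ := hJ1
      have h6 : γ * (Qf U D f γ h l y - ε' + Δ) ≤ γ * J f γ h l πu πd (cl f πu πd y) :=
        mul_le_mul_of_nonneg_left h5 hγ0.le
      have h7 : γ * Qf U D f γ h l y + E ≤ γ * (Qf U D f γ h l y - ε' + Δ) := by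
        rcases le_total (γ * Δ - ε') 0 with hc | hc
        · rw [hE, min_eq_right hc]; nlinarith
        · rw [hE, min_eq_left hc]; nlinarith
      linarith
    calc Vf U D f γ h l y + E ≤ Phi γ h l y (Qf U D f γ h l y) + E := by
          linarith [V_le_TV (U := U) (D := D) f γ h l hγ0 hγ1 hh hl y]
      _ ≤ min (l y) (max (h y) (γ * Qf U D f γ h l y + E)) :=
          shiftE _ _ _ E hE0
      _ ≤ min (l y) (max (h y) (γ * J f γ h l πu πd (cl f πu πd y))) :=
          min_le_min le_rfl (max_le_max le_rfl hchain)
      _ = J f γ h l πu πd y := (J_rec f γ h l hγ0 hγ1 hh hl πu πd y).symm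
  have hΔge : min 0 (γ * Δ - ε') ≤ Δ := by
    apply le_ciInf
    rintro ⟨πd, y⟩
    have := key πd y
    simp only
    linarith
  have hΔε : -ε ≤ Δ := by
    rcases le_total (γ * Δ - ε') 0 with hc | hc
    · rw [min_eq_right hc] at hΔge
      nlinarith
    · rw [min_eq_left hc] at hΔge
      nlinarith
  intro πd y
  have := ciInf_le bddΔ (πd, y)
  simp only at this
  have : Δ ≤ J f γ h l πu πd y - Vf U D f γ h l y := this
  linarith

include hγ0 hγ1 hh hl in
theorem Q_le_S (x : Fin n → ℝ) : Qf U D f γ h l x ≤ Sf U D f γ h l x := by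
  apply le_of_forall_pos_le_add
  intro ε hε
  set ε2 := ε / 2 with hε2
  have hε20 : 0 < ε2 := by linarith
  have hgl : ∀ y, ∃ u : U, Qf U D f γ h l y - (1 - γ) * ε2 <
      ⨅ d : D, Vf U D f γ h l (f y (u : Fin mu → ℝ) (d : Fin md → ℝ)) := by
    intro y
    have h0 : (0 : ℝ) < (1 - γ) * ε2 := by nlinarith
    have hlt : Qf U D f γ h l y - (1 - γ) * ε2 <
        ⨆ u : U, ⨅ d : D, Vf U D f γ h l (f y (u : Fin mu → ℝ) (d : Fin md → ℝ)) := by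
      show Qf U D f γ h l y - (1 - γ) * ε2 < Qf U D f γ h l y
      linarith
    exact exists_lt_of_lt_ciSup hlt
  choose πu hπu using hgl
  have hgreedy : ∀ y, Qf U D f γ h l y - (1 - γ) * ε2 ≤
      ⨅ d : D, Vf U D f γ h l (f y ((πu y : U) : Fin mu → ℝ) (d : Fin md → ℝ)) :=
    fun y => (hπu y).le
  have hgood := greedy_good f γ h l hγ0 hγ1 hh hl hε20 πu hgreedy
  have step1 : (⨅ d : D, Vf U D f γ h l (f x ((πu x : U) : Fin mu → ℝ) (d : Fin md → ℝ))) - ε2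
      ≤ ⨅ πd : (Fin n → ℝ) → D,
        J f γ h l πu πd (f x ((πu x : U) : Fin mu → ℝ) ((πd x : D) : Fin md → ℝ)) := by
    apply le_ciInf
    intro πd
    have h1 := hgood πd (f x ((πu x : U) : Fin mu → ℝ) ((πd x : D) : Fin md → ℝ))
    have h2 : (⨅ d : D, Vf U D f γ h l (f x ((πu x : U) : Fin mu → ℝ) (d : Fin md → ℝ)))
        ≤ Vf U D f γ h l (f x ((πu x : U) : Fin mu → ℝ) ((πd x : D) : Fin md → ℝ)) :=
      ciInf_le (bddBelow_of_abs fun d : D => abs_Vf_le f γ h l hγ0 hγ1 hh hl _) (πd x)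
    linarith
  have step2 : Qf U D f γ h l x - (1 - γ) * ε2 - ε2 ≤ Sf U D f γ h l x := by
    refine le_trans ?_ (le_ciSup
      (bddAbove_of_abs fun πu' => abs_iInfJS_le f γ h l hγ0 hγ1 hh hl πu' x) πu)
    have := hgreedy x
    linarith [step1]
  have : (1 - γ) * ε2 + ε2 ≤ ε := by nlinarith
  linarith

end main

end VB

/-- the Bellman equation for `V`:
`V(x) = min( l(x), max( H_g(x), γ · sup_{u ∈ U} inf_{d ∈ D} V(f(x,u,d)) ) )`. -/
theorem Vval_bellman {n mu md : ℕ} (U : Set (Fin mu → ℝ)) (D : Set (Fin md → ℝ))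
    (hUne : U.Nonempty) (hDne : D.Nonempty) (hUc : IsCompact U) (hDc : IsCompact D)
    (f : (Fin n → ℝ) → (Fin mu → ℝ) → (Fin md → ℝ) → (Fin n → ℝ))
    (hf : Continuous fun p : (Fin n → ℝ) × (Fin mu → ℝ) × (Fin md → ℝ) =>
      f p.1 p.2.1 p.2.2)
    (γ : ℝ) (hγ : γ ∈ Set.Ioo (0 : ℝ) 1)
    (g l : (Fin n → ℝ) → ℝ)
    (Kg Kl : NNReal) (hgL : LipschitzWith Kg g) (hlL : LipschitzWith Kl l)
    (hg : ∃ M, ∀ y, |g y| ≤ M) (hl : ∃ M, ∀ y, |l y| ≤ M)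
    (x : Fin n → ℝ) :
    Vval U D f γ g l x =
      min (l x) (max (Hg U D f γ g l x)
        (γ * ⨆ u : U, ⨅ d : D, Vval U D f γ g l (f x u d))) := by
  haveI : Nonempty U := hUne.to_subtype
  haveI : Nonempty D := hDne.to_subtype
  obtain ⟨Mg, hMg⟩ := hg
  obtain ⟨Ml, hMl⟩ := hl
  set M := max Mg Ml with hM
  have hγ0 : 0 < γ := hγ.1
  have hγ1 : γ < 1 := hγ.2
  have hlM : ∀ y, |l y| ≤ M := fun y => le_trans (hMl y) (le_max_right _ _)
  have hgM : ∀ y, |g y| ≤ M := fun y => le_trans (hMg y) (le_max_left _ _)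
  set h := Hg U D f γ g l with hh_def
  have hhM : ∀ y, |h y| ≤ M := by
    intro y
    have hbase : ∀ (πu : (Fin n → ℝ) → U) (πd : (Fin n → ℝ) → D) (t : ℕ),
        |γ ^ t * min (g ((cl f πu πd)^[t] y)) (l ((cl f πu πd)^[t] y))| ≤ M := by
      intro πu πd t
      have h1 : |γ ^ t| ≤ 1 := by
        rw [abs_pow, abs_of_pos hγ0]
        exact pow_le_one₀ hγ0.le hγ1.le
      have h2 : |min (g ((cl f πu πd)^[t] y)) (l ((cl f πu πd)^[t] y))| ≤ M := by
        rw [abs_le]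
        constructor
        · exact le_min (abs_le.1 (hgM _)).1 (abs_le.1 (hlM _)).1
        · exact le_trans (min_le_left _ _) (abs_le.1 (hgM _)).2
      rw [abs_mul]
      calc |γ ^ t| * |min _ _| ≤ 1 * M :=
        mul_le_mul h1 h2 (abs_nonneg _) zero_le_one
      _ = M := one_mul M
    have hHval : |Hval U D f γ g l y| ≤ M :=
      VB.abs_ciSup_le fun πu => VB.abs_ciInf_le fun πd => VB.abs_ciInf_le fun t =>
        hbase πu πd t
    rw [hh_def]
    unfold Hg
    split_ifs
    · exact hHval
    · exact hgM y
  have hVV : ∀ y, Vval U D f γ g l y = VB.Vf U D f γ h l y := fun y => rfl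
  have hrec : VB.Vf U D f γ h l x = VB.Phi γ h l x (VB.Sf U D f γ h l x) :=
    VB.V_rec (U := U) (D := D) f γ h l hγ0 hγ1 hhM hlM x
  have hSQ : VB.Sf U D f γ h l x = VB.Qf U D f γ h l x :=
    le_antisymm (VB.S_le_Q (U := U) (D := D) f γ h l hγ0 hγ1 hhM hlM x)
      (VB.Q_le_S (U := U) (D := D) f γ h l hγ0 hγ1 hhM hlM x)
  calc Vval U D f γ g l x = VB.Phi γ h l x (VB.Sf U D f γ h l x) := hrec
    _ = VB.Phi γ h l x (VB.Qf U D f γ h l x) := by rw [hSQ]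
    _ = min (l x) (max (Hg U D f γ g l x)
        (γ * ⨆ u : U, ⨅ d : D, Vval U D f γ g l (f x u d))) := rfl
end
end

section
/- The Bellman operator associated with V is a γ-contraction in the supremum norm: let h, l : ℝⁿ → ℝ be bounded functions, let W₁, W₂ : ℝⁿ → ℝ be bounded functions, and define (T_V W)(x) = min( l(x), max( h(x), γ · sup over u ∈ U of inf over d ∈ D of W(f(x,u,d)) ) ). If c ≥ 0 and |W₁(y) − W₂(y)| ≤ c for all y ∈ ℝⁿ, then |(T_V W₁)(x) − (T_V W₂)(x)| ≤ γ·c for all x ∈ ℝⁿ. -/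
open Set

lemma aux_inf {ι : Type*} [Nonempty ι] (g₁ g₂ : ι → ℝ) (c : ℝ)
    (hb₁ : BddBelow (Set.range g₁)) (hb₂ : BddBelow (Set.range g₂))
    (h : ∀ i, |g₁ i - g₂ i| ≤ c) : |(⨅ i, g₁ i) - ⨅ i, g₂ i| ≤ c := by
  rw [abs_sub_le_iff]
  constructor
  · have : (⨅ i, g₁ i) - c ≤ ⨅ i, g₂ i := by
      apply le_ciInf; intro i
      have h1 := ciInf_le hb₁ i
      have h2 := abs_sub_le_iff.mp (h i)
      linarith [h2.1]
    linarith
  · have : (⨅ i, g₂ i) - c ≤ ⨅ i, g₁ i := by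
      apply le_ciInf; intro i
      have h1 := ciInf_le hb₂ i
      have h2 := abs_sub_le_iff.mp (h i)
      linarith [h2.2]
    linarith

lemma aux_sup {ι : Type*} [Nonempty ι] (g₁ g₂ : ι → ℝ) (c : ℝ)
    (hb₁ : BddAbove (Set.range g₁)) (hb₂ : BddAbove (Set.range g₂))
    (h : ∀ i, |g₁ i - g₂ i| ≤ c) : |(⨆ i, g₁ i) - ⨆ i, g₂ i| ≤ c := by
  rw [abs_sub_le_iff]
  constructor
  · have : (⨆ i, g₁ i) ≤ (⨆ i, g₂ i) + c := by
      apply ciSup_le; intro i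
      have h1 := le_ciSup hb₂ i
      have h2 := abs_sub_le_iff.mp (h i)
      linarith [h2.1]
    linarith
  · have : (⨆ i, g₂ i) ≤ (⨆ i, g₁ i) + c := by
      apply ciSup_le; intro i
      have h1 := le_ciSup hb₁ i
      have h2 := abs_sub_le_iff.mp (h i)
      linarith [h2.2]
    linarith

lemma aux_inf_bdd {ι : Type*} [Nonempty ι] (g : ι → ℝ) (M : ℝ)
    (hM : ∀ i, |g i| ≤ M) : |⨅ i, g i| ≤ M := by
  have hb : BddBelow (Set.range g) :=
    ⟨-M, by rintro _ ⟨i, rfl⟩; linarith [(abs_le.mp (hM i)).1]⟩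
  rw [abs_le]
  constructor
  · apply le_ciInf; intro i; linarith [(abs_le.mp (hM i)).1]
  · obtain ⟨i⟩ := (inferInstance : Nonempty ι)
    have := ciInf_le hb i
    linarith [(abs_le.mp (hM i)).2]

/-- the Bellman operator
`(T_V W)(x) = min( l(x), max( h(x), γ · sup_{u ∈ U} inf_{d ∈ D} W(f(x,u,d)) ) )`
is a `γ`-contraction in the supremum norm. -/
theorem bellman_V_contraction {n mu md : ℕ} (U : Set (Fin mu → ℝ)) (D : Set (Fin md → ℝ))
    (hU : U.Nonempty) (hD : D.Nonempty)
    (f : (Fin n → ℝ) → (Fin mu → ℝ) → (Fin md → ℝ) → (Fin n → ℝ))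
    (γ : ℝ) (hγ : γ ∈ Set.Ioo (0 : ℝ) 1)
    (h l : (Fin n → ℝ) → ℝ)
    (hh : ∃ M, ∀ y, |h y| ≤ M) (hl : ∃ M, ∀ y, |l y| ≤ M)
    (W₁ W₂ : (Fin n → ℝ) → ℝ)
    (hW₁ : ∃ M, ∀ y, |W₁ y| ≤ M) (hW₂ : ∃ M, ∀ y, |W₂ y| ≤ M)
    (c : ℝ) (hc : 0 ≤ c) (hW : ∀ y, |W₁ y - W₂ y| ≤ c) :
    ∀ x : Fin n → ℝ,
      |min (l x) (max (h x) (γ * ⨆ u : U, ⨅ d : D, W₁ (f x u d))) -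
        min (l x) (max (h x) (γ * ⨆ u : U, ⨅ d : D, W₂ (f x u d)))| ≤ γ * c := by
  intro x
  have : Nonempty U := hU.to_subtype
  have : Nonempty D := hD.to_subtype
  obtain ⟨M₁, hM₁⟩ := hW₁
  obtain ⟨M₂, hM₂⟩ := hW₂
  set g₁ : U → ℝ := fun u => ⨅ d : D, W₁ (f x u d) with hg₁
  set g₂ : U → ℝ := fun u => ⨅ d : D, W₂ (f x u d) with hg₂
  have hbg₁ : ∀ u, |g₁ u| ≤ M₁ := fun u => aux_inf_bdd _ _ (fun d => hM₁ _)
  have hbg₂ : ∀ u, |g₂ u| ≤ M₂ := fun u => aux_inf_bdd _ _ (fun d => hM₂ _)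
  have hsup : |(⨆ u, g₁ u) - ⨆ u, g₂ u| ≤ c := by
    apply aux_sup
    · exact ⟨M₁, by rintro _ ⟨u, rfl⟩; exact (abs_le.mp (hbg₁ u)).2⟩
    · exact ⟨M₂, by rintro _ ⟨u, rfl⟩; exact (abs_le.mp (hbg₂ u)).2⟩
    · intro u
      apply aux_inf
      · exact ⟨-M₁, by rintro _ ⟨d, rfl⟩; linarith [(abs_le.mp (hM₁ (f x u d))).1]⟩
      · exact ⟨-M₂, by rintro _ ⟨d, rfl⟩; linarith [(abs_le.mp (hM₂ (f x u d))).1]⟩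
      · intro d; exact hW _
  have key : |γ * (⨆ u, g₁ u) - γ * (⨆ u, g₂ u)| ≤ γ * c := by
    rw [← mul_sub, abs_mul, abs_of_pos hγ.1]
    exact mul_le_mul_of_nonneg_left hsup (le_of_lt hγ.1)
  calc |min (l x) (max (h x) (γ * ⨆ u, g₁ u)) - min (l x) (max (h x) (γ * ⨆ u, g₂ u))|
      ≤ max |l x - l x| |max (h x) (γ * ⨆ u, g₁ u) - max (h x) (γ * ⨆ u, g₂ u)| :=
        abs_min_sub_min_le_max _ _ _ _
    _ ≤ max |l x - l x| (max |h x - h x| |γ * (⨆ u, g₁ u) - γ * (⨆ u, g₂ u)|) := by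
        apply max_le_max le_rfl (abs_max_sub_max_le_max _ _ _ _)
    _ ≤ γ * c := by
        simp only [sub_self, abs_zero]
        have : 0 ≤ γ * c := mul_nonneg hγ.1.le hc
        exact max_le this (max_le this key)
end

section
/- The Bellman equation for V has at most one bounded solution: let h, l : ℝⁿ → ℝ be bounded functions; if W₁, W₂ : ℝⁿ → ℝ are bounded functions such that for all x ∈ ℝⁿ, W_i(x) = min( l(x), max( h(x), γ · sup over u ∈ U of inf over d ∈ D of W_i(f(x,u,d)) ) ) for i = 1, 2, then W₁ = W₂. -/
/-!
The right-hand side of the Bellman equation is a `γ`-contraction for the sup distance on bounded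
functions: truncating by `min (l x)` and `max (h x)` is `1`-Lipschitz, and so are `⨆ u` and `⨅ d`
(an empty `U` or `D` gives the junk value `0` for both solutions alike). Hence the
sup distance `S` between two bounded solutions satisfies `S ≤ γ S`, which forces `S = 0`.
-/

open Set

section SupInf

variable {ι κ : Sort*} {f g : ι → ℝ} {c M : ℝ}

lemma ciSup_le_ciSup_add (hg : BddAbove (range g)) (hc : 0 ≤ c) (h : ∀ i, f i ≤ g i + c) :
    ⨆ i, f i ≤ (⨆ i, g i) + c := by
  cases isEmpty_or_nonempty ι
  · simpa using hc
  · exact ciSup_le fun i => (h i).trans (add_le_add_left (le_ciSup hg i) c)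

lemma ciInf_le_ciInf_add (hf : BddBelow (range f)) (hc : 0 ≤ c) (h : ∀ i, f i ≤ g i + c) :
    ⨅ i, f i ≤ (⨅ i, g i) + c := by
  cases isEmpty_or_nonempty ι
  · simpa using hc
  · exact le_ciInf_add fun i => (ciInf_le hf i).trans (h i)

lemma abs_ciSup_sub_ciSup_le (hf : BddAbove (range f)) (hg : BddAbove (range g)) (hc : 0 ≤ c)
    (h : ∀ i, |f i - g i| ≤ c) : |(⨆ i, f i) - ⨆ i, g i| ≤ c := by
  refine abs_sub_le_iff.2 ⟨sub_le_iff_le_add'.2 ?_, sub_le_iff_le_add'.2 ?_⟩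
  · exact ciSup_le_ciSup_add hg hc fun i => by linarith [abs_sub_le_iff.1 (h i)]
  · exact ciSup_le_ciSup_add hf hc fun i => by linarith [abs_sub_le_iff.1 (h i)]

lemma abs_ciInf_sub_ciInf_le (hf : BddBelow (range f)) (hg : BddBelow (range g)) (hc : 0 ≤ c)
    (h : ∀ i, |f i - g i| ≤ c) : |(⨅ i, f i) - ⨅ i, g i| ≤ c := by
  refine abs_sub_le_iff.2 ⟨sub_le_iff_le_add'.2 ?_, sub_le_iff_le_add'.2 ?_⟩
  · exact ciInf_le_ciInf_add hf hc fun i => by linarith [abs_sub_le_iff.1 (h i)]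
  · exact ciInf_le_ciInf_add hg hc fun i => by linarith [abs_sub_le_iff.1 (h i)]

lemma bddBelow_range_of_abs_le (hf : ∀ i, |f i| ≤ M) : BddBelow (range f) :=
  ⟨-M, forall_mem_range.2 fun i => neg_le_of_abs_le (hf i)⟩

lemma bddAbove_range_of_abs_le (hf : ∀ i, |f i| ≤ M) : BddAbove (range f) :=
  ⟨M, forall_mem_range.2 fun i => le_of_abs_le (hf i)⟩

lemma abs_ciInf_le (hf : ∀ i, |f i| ≤ M) (hM : 0 ≤ M) : |⨅ i, f i| ≤ M := by
  cases isEmpty_or_nonempty ι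
  · simpa using hM
  · exact abs_le.2 ⟨le_ciInf fun i => neg_le_of_abs_le (hf i),
      (ciInf_le (bddBelow_range_of_abs_le hf) (Classical.arbitrary ι)).trans
        (le_of_abs_le (hf _))⟩

lemma abs_ciSup_ciInf_sub_ciSup_ciInf_le {φ ψ : ι → κ → ℝ} {M₁ M₂ : ℝ}
    (hφ : ∀ i j, |φ i j| ≤ M₁) (hψ : ∀ i j, |ψ i j| ≤ M₂) (hM₁ : 0 ≤ M₁) (hM₂ : 0 ≤ M₂)
    (hc : 0 ≤ c) (h : ∀ i j, |φ i j - ψ i j| ≤ c) :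
    |(⨆ i, ⨅ j, φ i j) - ⨆ i, ⨅ j, ψ i j| ≤ c :=
  abs_ciSup_sub_ciSup_le (bddAbove_range_of_abs_le fun i => abs_ciInf_le (hφ i) hM₁)
    (bddAbove_range_of_abs_le fun i => abs_ciInf_le (hψ i) hM₂) hc fun i =>
    abs_ciInf_sub_ciInf_le (bddBelow_range_of_abs_le (hφ i)) (bddBelow_range_of_abs_le (hψ i))
      hc (h i)

end SupInf

lemma abs_min_sub_min_le_abs {α : Type*} [AddCommGroup α] [LinearOrder α]
    [IsOrderedAddMonoid α] (a b c : α) : |min a b - min a c| ≤ |b - c| := by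
  simpa using abs_min_sub_min_le_max a b a c

lemma eq_of_abs_sub_le_contraction {X : Type*} {g₁ g₂ : X → ℝ} {γ : ℝ} (hγ₀ : 0 ≤ γ)
    (hγ₁ : γ < 1) (hbdd : ∃ M, ∀ x, |g₁ x - g₂ x| ≤ M)
    (hcontr : ∀ c, 0 ≤ c → (∀ x, |g₁ x - g₂ x| ≤ c) → ∀ x, |g₁ x - g₂ x| ≤ γ * c) :
    g₁ = g₂ := by
  obtain ⟨M, hM⟩ := hbdd
  set S := ⨆ x, |g₁ x - g₂ x|
  have hS : ∀ x, |g₁ x - g₂ x| ≤ S :=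
    le_ciSup (bddAbove_range_of_abs_le fun x => (abs_abs _).trans_le (hM x))
  have hS₀ : 0 ≤ S := Real.iSup_nonneg fun _ => abs_nonneg _
  have hSγ : S ≤ γ * S := Real.iSup_le (hcontr S hS₀ hS) (mul_nonneg hγ₀ hS₀)
  have hS_eq : S = 0 := by nlinarith
  funext x
  exact sub_eq_zero.1 (abs_nonpos_iff.1 (hS_eq ▸ hS x))

noncomputable def bellmanV {X A B : Type*} (U : Set A) (D : Set B) (f : X → A → B → X) (γ : ℝ)
    (h l W : X → ℝ) (x : X) : ℝ :=
  min (l x) (max (h x) (γ * ⨆ u : U, ⨅ d : D, W (f x u d)))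

lemma abs_bellmanV_sub_bellmanV_le {X A B : Type*} {U : Set A} {D : Set B} {f : X → A → B → X}
    {γ : ℝ} {h l W₁ W₂ : X → ℝ} {M₁ M₂ c : ℝ} (hγ : 0 ≤ γ) (hW₁ : ∀ y, |W₁ y| ≤ M₁)
    (hW₂ : ∀ y, |W₂ y| ≤ M₂) (hM₁ : 0 ≤ M₁) (hM₂ : 0 ≤ M₂) (hc : 0 ≤ c)
    (hW : ∀ y, |W₁ y - W₂ y| ≤ c) (x : X) :
    |bellmanV U D f γ h l W₁ x - bellmanV U D f γ h l W₂ x| ≤ γ * c := by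
  set v₁ := ⨆ u : U, ⨅ d : D, W₁ (f x u d)
  set v₂ := ⨆ u : U, ⨅ d : D, W₂ (f x u d)
  calc |bellmanV U D f γ h l W₁ x - bellmanV U D f γ h l W₂ x|
      ≤ |max (h x) (γ * v₁) - max (h x) (γ * v₂)| := abs_min_sub_min_le_abs _ _ _
    _ ≤ |γ * v₁ - γ * v₂| := by
        simpa only [max_comm (h x)] using abs_max_sub_max_le_abs (γ * v₁) (γ * v₂) (h x)
    _ = γ * |v₁ - v₂| := by rw [← mul_sub, abs_mul, abs_of_nonneg hγ]
    _ ≤ γ * c := mul_le_mul_of_nonneg_left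
        (abs_ciSup_ciInf_sub_ciSup_ciInf_le (fun _ _ => hW₁ _) (fun _ _ => hW₂ _) hM₁ hM₂ hc
          fun _ _ => hW _) hγ

theorem bellman_V_unique_general {n mu md : ℕ} (U : Set (Fin mu → ℝ)) (D : Set (Fin md → ℝ))
    (f : (Fin n → ℝ) → (Fin mu → ℝ) → (Fin md → ℝ) → (Fin n → ℝ))
    (γ : ℝ) (hγ : γ ∈ Set.Ioo (0 : ℝ) 1)
    (h l : (Fin n → ℝ) → ℝ)
    (W₁ W₂ : (Fin n → ℝ) → ℝ)
    (hW₁ : ∃ M, ∀ y, |W₁ y| ≤ M) (hW₂ : ∃ M, ∀ y, |W₂ y| ≤ M)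
    (hB₁ : ∀ x, W₁ x = min (l x) (max (h x) (γ * ⨆ u : U, ⨅ d : D, W₁ (f x u d))))
    (hB₂ : ∀ x, W₂ x = min (l x) (max (h x) (γ * ⨆ u : U, ⨅ d : D, W₂ (f x u d)))) :
    W₁ = W₂ := by
  obtain ⟨M₁, hM₁⟩ := hW₁
  obtain ⟨M₂, hM₂⟩ := hW₂
  have hM₁₀ : 0 ≤ M₁ := (abs_nonneg _).trans (hM₁ 0)
  have hM₂₀ : 0 ≤ M₂ := (abs_nonneg _).trans (hM₂ 0)
  refine eq_of_abs_sub_le_contraction hγ.1.le hγ.2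
    ⟨M₁ + M₂, fun y => (abs_sub _ _).trans (add_le_add (hM₁ y) (hM₂ y))⟩ fun c hc hW x => ?_
  rw [hB₁ x, hB₂ x]
  exact abs_bellmanV_sub_bellmanV_le hγ.1.le hM₁ hM₂ hM₁₀ hM₂₀ hc hW x

/-- the Bellman equation for `V` has at most one bounded solution. -/
theorem bellman_V_unique {n mu md : ℕ} (U : Set (Fin mu → ℝ)) (D : Set (Fin md → ℝ))
    (hU : U.Nonempty) (hD : D.Nonempty)
    (f : (Fin n → ℝ) → (Fin mu → ℝ) → (Fin md → ℝ) → (Fin n → ℝ))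
    (γ : ℝ) (hγ : γ ∈ Set.Ioo (0 : ℝ) 1)
    (h l : (Fin n → ℝ) → ℝ)
    (hh : ∃ M, ∀ y, |h y| ≤ M) (hl : ∃ M, ∀ y, |l y| ≤ M)
    (W₁ W₂ : (Fin n → ℝ) → ℝ)
    (hW₁ : ∃ M, ∀ y, |W₁ y| ≤ M) (hW₂ : ∃ M, ∀ y, |W₂ y| ≤ M)
    (hB₁ : ∀ x, W₁ x = min (l x) (max (h x) (γ * ⨆ u : U, ⨅ d : D, W₁ (f x u d))))
    (hB₂ : ∀ x, W₂ x = min (l x) (max (h x) (γ * ⨆ u : U, ⨅ d : D, W₂ (f x u d)))) :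
    W₁ = W₂ :=
  bellman_V_unique_general U D f γ hγ h l W₁ W₂ hW₁ hW₂ hB₁ hB₂
end

section
/- One-step recursion of the discounted reach-avoid payoff: let h, l : ℝⁿ → ℝ be bounded functions, γ ∈ (0,1), and (x_t)_{t ∈ ℕ} any sequence in ℝⁿ. Define J = sup over t ∈ ℕ of min( γ^t h(x_t), inf over s ∈ {0,…,t} of γ^s l(x_s) ) and J' = sup over t ∈ ℕ of min( γ^t h(x_{t+1}), inf over s ∈ {0,…,t} of γ^s l(x_{s+1}) ). Then J = min( l(x_0), max( h(x_0), γ·J' ) ). -/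
open Set

private lemma fin_inf_succ' {m : ℕ} (g : Fin (m + 2) → ℝ) :
    (⨅ s : Fin (m + 2), g s) = min (g 0) (⨅ s : Fin (m + 1), g s.succ) := by
  apply le_antisymm
  · exact le_min (ciInf_le (Finite.bddBelow_range g) 0)
      (le_ciInf fun s => ciInf_le (Finite.bddBelow_range g) s.succ)
  · refine le_ciInf fun s => ?_
    induction s using Fin.cases with
    | zero => exact min_le_left _ _
    | succ i => exact (min_le_right _ _).trans (ciInf_le (Finite.bddBelow_range _) i)

private lemma sup_succ {f : ℕ → ℝ} (hb : BddAbove (Set.range f)) :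
    (⨆ t, f t) = max (f 0) (⨆ t, f (t + 1)) := by
  have hb' : BddAbove (Set.range fun t => f (t + 1)) := by
    obtain ⟨M, hM⟩ := hb
    exact ⟨M, by rintro _ ⟨t, rfl⟩; exact hM ⟨t + 1, rfl⟩⟩
  apply le_antisymm
  · refine ciSup_le fun t => ?_
    cases t with
    | zero => exact le_max_left _ _
    | succ t => exact le_max_of_le_right (le_ciSup hb' t)
  · exact max_le (le_ciSup hb 0) (ciSup_le fun t => le_ciSup hb (t + 1))

/-- one-step recursion of the discounted reach-avoid payoff:
with `J = sup_t min( γ^t h(x_t), inf_{s ≤ t} γ^s l(x_s) )` and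
`J' = sup_t min( γ^t h(x_{t+1}), inf_{s ≤ t} γ^s l(x_{s+1}) )`, one has
`J = min( l(x_0), max( h(x_0), γ·J' ) )`. -/
theorem discounted_reach_avoid_recursion {n : ℕ} (h l : (Fin n → ℝ) → ℝ)
    (hh : ∃ M, ∀ y, |h y| ≤ M) (hl : ∃ M, ∀ y, |l y| ≤ M)
    (γ : ℝ) (hγ : γ ∈ Set.Ioo (0 : ℝ) 1)
    (x : ℕ → (Fin n → ℝ)) :
    (⨆ t : ℕ, min (γ ^ t * h (x t)) (⨅ s : Fin (t + 1), γ ^ (s : ℕ) * l (x s))) =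
      min (l (x 0)) (max (h (x 0))
        (γ * ⨆ t : ℕ, min (γ ^ t * h (x (t + 1)))
          (⨅ s : Fin (t + 1), γ ^ (s : ℕ) * l (x ((s : ℕ) + 1))))) := by
  obtain ⟨hγ0, hγ1⟩ := hγ
  obtain ⟨Mh, hMh⟩ := hh
  set F : ℕ → ℝ := fun t => min (γ ^ t * h (x t)) (⨅ s : Fin (t + 1), γ ^ (s : ℕ) * l (x s))
    with hF
  set F' : ℕ → ℝ := fun t => min (γ ^ t * h (x (t + 1)))
    (⨅ s : Fin (t + 1), γ ^ (s : ℕ) * l (x ((s : ℕ) + 1))) with hF'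
  have hγt : ∀ t : ℕ, 0 < γ ^ t ∧ γ ^ t ≤ 1 := fun t =>
    ⟨pow_pos hγ0 t, pow_le_one₀ hγ0.le hγ1.le⟩
  have hbnd : ∀ (z : ℝ) (t : ℕ) (y), γ ^ t * h y ≤ z → min (γ ^ t * h y) z ≤ Mh := by
    intro z t y _
    calc min (γ ^ t * h y) z ≤ γ ^ t * h y := min_le_left _ _
      _ ≤ γ ^ t * Mh := by
          exact mul_le_mul_of_nonneg_left ((abs_le.mp (hMh y)).2) (hγt t).1.le
      _ ≤ Mh := by
          have hM0 : 0 ≤ Mh := (abs_nonneg _).trans (hMh y)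
          nlinarith [(hγt t).2, (hγt t).1]
  have hbF : BddAbove (Set.range F) := by
    refine ⟨Mh, ?_⟩
    rintro _ ⟨t, rfl⟩
    calc F t ≤ γ ^ t * h (x t) := min_le_left _ _
      _ ≤ γ ^ t * Mh := mul_le_mul_of_nonneg_left ((abs_le.mp (hMh _)).2) (hγt t).1.le
      _ ≤ Mh := by
          have hM0 : 0 ≤ Mh := (abs_nonneg _).trans (hMh (x t))
          nlinarith [(hγt t).2, (hγt t).1]
  have hbF' : BddAbove (Set.range F') := by
    refine ⟨Mh, ?_⟩
    rintro _ ⟨t, rfl⟩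
    calc F' t ≤ γ ^ t * h (x (t + 1)) := min_le_left _ _
      _ ≤ γ ^ t * Mh := mul_le_mul_of_nonneg_left ((abs_le.mp (hMh _)).2) (hγt t).1.le
      _ ≤ Mh := by
          have hM0 : 0 ≤ Mh := (abs_nonneg _).trans (hMh (x t))
          nlinarith [(hγt t).2, (hγt t).1]
  -- key pointwise identity
  have key : ∀ t : ℕ, F (t + 1) = min (l (x 0)) (γ * F' t) := by
    intro t
    have hinf : (⨅ s : Fin (t + 2), γ ^ (s : ℕ) * l (x s)) =
        min (l (x 0)) (⨅ s : Fin (t + 1), γ ^ ((s : ℕ) + 1) * l (x ((s : ℕ) + 1))) := by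
      rw [fin_inf_succ' (fun s : Fin (t + 2) => γ ^ (s : ℕ) * l (x s))]
      simp [Fin.val_succ]
    have hmul : γ * (⨅ s : Fin (t + 1), γ ^ (s : ℕ) * l (x ((s : ℕ) + 1))) =
        ⨅ s : Fin (t + 1), γ ^ ((s : ℕ) + 1) * l (x ((s : ℕ) + 1)) := by
      rw [Monotone.map_ciInf_of_continuousAt (f := fun y => γ * y)
        (continuousAt_const.mul continuousAt_id)
        (fun a b hab => mul_le_mul_of_nonneg_left hab hγ0.le)
        (Finite.bddBelow_range _)]
      congr 1; funext s; ring
    have hmin : γ * F' t = min (γ ^ (t + 1) * h (x (t + 1)))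
        (⨅ s : Fin (t + 1), γ ^ ((s : ℕ) + 1) * l (x ((s : ℕ) + 1))) := by
      rw [hF', mul_min_of_nonneg _ _ hγ0.le, hmul]
      ring_nf
    show min (γ ^ (t + 1) * h (x (t + 1))) (⨅ s : Fin (t + 2), γ ^ (s : ℕ) * l (x s)) = _
    rw [hinf, hmin, min_left_comm]
  have hF0 : F 0 = min (h (x 0)) (l (x 0)) := by
    simp [hF, ciInf_unique]
  have hsplit : (⨆ t, F t) = max (F 0) (⨆ t, F (t + 1)) := sup_succ hbF
  have hdistr : (⨆ t, F (t + 1)) = min (l (x 0)) (γ * ⨆ t, F' t) := by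
    have h1 : γ * (⨆ t, F' t) = ⨆ t, γ * F' t :=
      Monotone.map_ciSup_of_continuousAt (f := fun y => γ * y)
        (continuousAt_const.mul continuousAt_id)
        (fun a b hab => mul_le_mul_of_nonneg_left hab hγ0.le) hbF'
    have hb2 : BddAbove (Set.range fun t => γ * F' t) := by
      obtain ⟨M, hM⟩ := hbF'
      refine ⟨γ * M, ?_⟩
      rintro _ ⟨t, rfl⟩
      exact mul_le_mul_of_nonneg_left (hM ⟨t, rfl⟩) hγ0.le
    have h2 : min (l (x 0)) (⨆ t, γ * F' t) = ⨆ t, min (l (x 0)) (γ * F' t) :=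
      Monotone.map_ciSup_of_continuousAt (f := fun y => min (l (x 0)) y)
        (continuousAt_const.min continuousAt_id)
        (fun a b hab => min_le_min le_rfl hab) hb2
    rw [h1, h2]
    exact iSup_congr key
  rw [show (⨆ t : ℕ, min (γ ^ t * h (x t)) (⨅ s : Fin (t + 1), γ ^ (s : ℕ) * l (x s))) =
      ⨆ t, F t from rfl, hsplit, hF0, hdistr]
  rw [min_max_distrib_left, min_comm (l (x 0)) (h (x 0)), max_comm]
end
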